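/- arXiv:0906.3069 — 9 statements merged into one kernel-verified Lean document; each statement's English description precedes it below -/
import Mathlib

section
/- Let k be a field containing a primitive n-th root of unity q (n ≥ 1). Then the matrix algebra M_n(k) admits a connected grading by the group C_n × C_n = (ZMod n) × (ZMod n): explicitly, with x the cyclic permutation matrix (x = Σ_{i=1}^{n-1} E_{i+1,i} + E_{1,n}) and y = diag(q, q², …, qⁿ), the family of submodules X^{(a,b)} = k·(x^a y^b) for (a,b) ∈ (ZMod n) × (ZMod n) is a grading of M_n(k) in which every homogeneous component is one-dimensional and the support is all of (ZMod n) × (ZMod n); in particular the support generates the group. -/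
open Matrix

/-- The cyclic permutation matrix `x = Σ_{i=1}^{n-1} E_{i+1,i} + E_{1,n}`
(indices taken cyclically in `Fin n`). -/
def cycMatrix (n : ℕ) (k : Type*) [Field k] : Matrix (Fin n) (Fin n) k :=
  Matrix.of fun j i => if (j : ℕ) = ((i : ℕ) + 1) % n then 1 else 0

/-- The diagonal matrix `y = diag(q, q², …, qⁿ)`. -/
def diagMatrix (n : ℕ) (k : Type*) [Field k] (q : k) : Matrix (Fin n) (Fin n) k :=
  Matrix.diagonal fun i => q ^ ((i : ℕ) + 1)

section aux
variable {n : ℕ} {k : Type*} [Field k] {q : k}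

lemma cycMatrix_pow (hn : 0 < n) (a : ℕ) :
    cycMatrix n k ^ a =
      Matrix.of fun j i : Fin n => if (j : ℕ) = ((i : ℕ) + a) % n then 1 else 0 := by
  induction a with
  | zero =>
    ext j i
    simp [Matrix.one_apply, Fin.ext_iff, Nat.mod_eq_of_lt i.isLt]
  | succ a ih =>
    rw [pow_succ, ih]
    ext j i
    rw [Matrix.mul_apply]
    have hlt : ((i : ℕ) + 1) % n < n := Nat.mod_lt _ hn
    set i' : Fin n := ⟨((i : ℕ) + 1) % n, hlt⟩ with hi'
    have hcond : ∀ l : Fin n, ((l : ℕ) = ((i : ℕ) + 1) % n) = (l = i') := by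
      intro l; rw [Fin.ext_iff]
    simp only [Matrix.of_apply, cycMatrix, hcond, mul_ite, mul_one, mul_zero,
      Finset.sum_ite_eq', Finset.mem_univ, if_true]
    have : ((i' : ℕ) + a) % n = ((i : ℕ) + (a + 1)) % n := by
      show (((i : ℕ) + 1) % n + a) % n = _
      rw [Nat.mod_add_mod]
      ring_nf
    rw [this]


lemma diagMatrix_pow (b : ℕ) :
    diagMatrix n k q ^ b = Matrix.diagonal fun i : Fin n => q ^ (b * ((i : ℕ) + 1)) := by
  rw [diagMatrix, Matrix.diagonal_pow]
  ext j i
  by_cases h : j = i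
  · subst h
    simp [Matrix.diagonal_apply_eq, ← pow_mul, mul_comm]
  · simp [Matrix.diagonal_apply_ne _ h]

lemma mEntry (hn : 0 < n) (a b : ℕ) (j i : Fin n) :
    (cycMatrix n k ^ a * diagMatrix n k q ^ b) j i =
      if (j : ℕ) = ((i : ℕ) + a) % n then q ^ (b * ((i : ℕ) + 1)) else 0 := by
  rw [diagMatrix_pow, Matrix.mul_diagonal, cycMatrix_pow hn]
  simp [Matrix.of_apply, ite_mul]

lemma qpow_mod (hq1 : q ^ n = 1) (s : ℕ) : q ^ s = q ^ (s % n) := by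
  conv_lhs => rw [← Nat.div_add_mod s n]
  rw [pow_add, pow_mul, hq1, one_pow, one_mul]

lemma qpow_congr (hq1 : q ^ n = 1) {s t : ℕ} (h : s % n = t % n) : q ^ s = q ^ t := by
  rw [qpow_mod hq1 s, h, ← qpow_mod hq1 t]


lemma mMod (hn : 0 < n) (hq1 : q ^ n = 1) (a b : ℕ) :
    cycMatrix n k ^ a * diagMatrix n k q ^ b =
      cycMatrix n k ^ (a % n) * diagMatrix n k q ^ (b % n) := by
  ext j i
  rw [mEntry hn, mEntry hn, Nat.add_mod_mod]
  have hv : q ^ (b * ((i : ℕ) + 1)) = q ^ (b % n * ((i : ℕ) + 1)) :=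
    qpow_congr hq1 (((Nat.mod_modEq b n).mul_right _).symm)
  rw [hv]

lemma mMul (hn : 0 < n) (hq1 : q ^ n = 1) (a b c d : ℕ) :
    (cycMatrix n k ^ a * diagMatrix n k q ^ b) * (cycMatrix n k ^ c * diagMatrix n k q ^ d) =
      q ^ (b * c) • (cycMatrix n k ^ (a + c) * diagMatrix n k q ^ (b + d)) := by
  ext j i
  rw [Matrix.smul_apply, Matrix.mul_apply, mEntry hn, smul_eq_mul]
  simp only [mEntry hn]
  have hlt : ((i : ℕ) + c) % n < n := Nat.mod_lt _ hn
  have hcond : ∀ l : Fin n, ((l : ℕ) = ((i : ℕ) + c) % n) = (l = (⟨((i : ℕ) + c) % n, hlt⟩ : Fin n)) := by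
    intro l; rw [Fin.ext_iff]
  simp only [hcond, mul_ite, mul_zero, Finset.sum_ite_eq', Finset.mem_univ, if_true]
  have hcc : (((i : ℕ) + c) % n + a) % n = ((i : ℕ) + (a + c)) % n := by
    rw [Nat.mod_add_mod]; congr 1; ring
  show (if (j : ℕ) = (((i : ℕ) + c) % n + a) % n then
      q ^ (b * (((i : ℕ) + c) % n + 1)) else 0) * q ^ (d * ((i : ℕ) + 1)) = _
  rw [hcc]
  have key : (b * (((i : ℕ) + c) % n + 1) + d * ((i : ℕ) + 1)) % n
      = (b * c + (b + d) * ((i : ℕ) + 1)) % n := by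
    have h1 : ((i : ℕ) + c) % n ≡ (i : ℕ) + c [MOD n] := Nat.mod_modEq _ _
    have h2 := ((h1.add_right 1).mul_left b).add_right (d * ((i : ℕ) + 1))
    calc (b * (((i : ℕ) + c) % n + 1) + d * ((i : ℕ) + 1)) % n
        = (b * (((i : ℕ) + c) + 1) + d * ((i : ℕ) + 1)) % n := h2
      _ = (b * c + (b + d) * ((i : ℕ) + 1)) % n := by congr 1; ring
  split_ifs with h
  · rw [← pow_add, ← pow_add]
    exact qpow_congr hq1 key
  · simp

end aux

/-- Let `k` be a field containing a primitive `n`-th root of unity `q` (`n ≥ 1`).  Then the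
family of submodules `X^{(a,b)} = k·(x^a y^b)`, `(a,b) ∈ ZMod n × ZMod n`, is a connected
grading of `M_n(k)` by `C_n × C_n`, every homogeneous component is one-dimensional, and the
support is all of `ZMod n × ZMod n`; in particular the support generates the group. -/
theorem stmt0 (n : ℕ) (hn : 1 ≤ n) (k : Type*) [Field k] (q : k)
    (hq : IsPrimitiveRoot q n)
    (X : ZMod n × ZMod n → Submodule k (Matrix (Fin n) (Fin n) k))
    (hX : X = fun g =>
      Submodule.span k {cycMatrix n k ^ g.1.val * diagMatrix n k q ^ g.2.val}) :
    iSupIndep X ∧ (⨆ g, X g) = ⊤ ∧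
    (∀ g h, X g * X h ≤ X (g + h)) ∧
    (∀ g, Module.finrank k (X g) = 1) ∧
    ({g | X g ≠ ⊥} = Set.univ) ∧
    AddSubgroup.closure {g | X g ≠ ⊥} = ⊤ := by
  haveI : NeZero n := ⟨by omega⟩
  have hn0 : 0 < n := hn
  have hq1 : q ^ n = 1 := hq.pow_eq_one
  have hq0 : q ≠ 0 := hq.ne_zero (by omega)
  set v : ZMod n × ZMod n → Matrix (Fin n) (Fin n) k :=
    fun g => cycMatrix n k ^ g.1.val * diagMatrix n k q ^ g.2.val with hv
  have hXv : X = fun g => Submodule.span k {v g} := hX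
  clear hX
  -- nonzeroness
  have hvne : ∀ g, v g ≠ 0 := by
    intro g h0
    have h1 := congrFun (congrFun h0 ⟨g.1.val, ZMod.val_lt g.1⟩) ⟨0, hn0⟩
    simp only [hv, mEntry hn0, Matrix.zero_apply] at h1
    have : g.1.val = ((0 : ℕ) + g.1.val) % n := by
      rw [Nat.zero_add, Nat.mod_eq_of_lt (ZMod.val_lt g.1)]
    rw [if_pos this] at h1
    exact pow_ne_zero _ hq0 h1
  -- linear independence
  have hli : LinearIndependent k v := by
    rw [Fintype.linearIndependent_iff]
    intro c hc g₀
    obtain ⟨a₀, b₀⟩ := g₀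
    have hrow : ∀ i : Fin n,
        ∑ b : ZMod n, c (a₀, b) * q ^ (b.val * ((i : ℕ) + 1)) = 0 := by
      intro i
      have hjlt : ((i : ℕ) + a₀.val) % n < n := Nat.mod_lt _ hn0
      have h1 := congrFun (congrFun hc ⟨((i : ℕ) + a₀.val) % n, hjlt⟩) i
      have hiff : ∀ a : ZMod n,
          (((i : ℕ) + a₀.val) % n = ((i : ℕ) + a.val) % n) = (a = a₀) := by
        intro a
        apply propext
        constructor
        · intro h
          have h' : (((i : ℕ) + a₀.val : ℕ) : ZMod n) = (((i : ℕ) + a.val : ℕ) : ZMod n) :=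
            (ZMod.natCast_eq_natCast_iff' _ _ _).mpr h
          push_cast at h'
          have h'' := add_left_cancel h'
          simpa [ZMod.natCast_val, ZMod.cast_id, eq_comm] using h''
        · intro h; rw [h]
      simp only [hv, Matrix.sum_apply, Matrix.smul_apply, smul_eq_mul, Matrix.zero_apply,
        mEntry hn0, hiff] at h1
      rw [Fintype.sum_prod_type, Finset.sum_comm] at h1
      simp only [mul_ite, mul_zero, Finset.sum_ite_eq', Finset.mem_univ, if_true] at h1
      exact h1
    -- polynomial argument
    classical
    set p : Polynomial k :=
      ∑ b : ZMod n, Polynomial.C (c (a₀, b)) * Polynomial.X ^ b.val with hp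
    have hdeg : p.natDegree < n := by
      apply lt_of_le_of_lt (Polynomial.natDegree_sum_le_of_forall_le _ _ fun b _ => ?_)
        (show n - 1 < n by omega)
      refine le_trans (Polynomial.natDegree_C_mul_le _ _) ?_
      rw [Polynomial.natDegree_X_pow]
      have := ZMod.val_lt b
      omega
    have hfinj : Function.Injective fun i : Fin n => q ^ ((i : ℕ) + 1) := by
      intro i j h
      simp only at h
      rw [qpow_mod hq1 ((i : ℕ) + 1), qpow_mod hq1 ((j : ℕ) + 1)] at h
      have h2 := hq.pow_inj (Nat.mod_lt _ hn0) (Nat.mod_lt _ hn0) h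
      have h3 : (i : ℕ) + 1 ≡ (j : ℕ) + 1 [MOD n] := h2
      have h4 : (i : ℕ) ≡ (j : ℕ) [MOD n] := Nat.ModEq.add_right_cancel' 1 h3
      have h5 : (i : ℕ) % n = (j : ℕ) % n := h4
      rw [Nat.mod_eq_of_lt i.isLt, Nat.mod_eq_of_lt j.isLt] at h5
      exact Fin.ext h5
    have heval : ∀ i : Fin n, p.eval (q ^ ((i : ℕ) + 1)) = 0 := by
      intro i
      rw [hp, Polynomial.eval_finset_sum]
      have : ∀ b : ZMod n,
          (Polynomial.C (c (a₀, b)) * Polynomial.X ^ b.val).eval (q ^ ((i : ℕ) + 1)) =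
            c (a₀, b) * q ^ (b.val * ((i : ℕ) + 1)) := by
        intro b
        rw [Polynomial.eval_mul, Polynomial.eval_C, Polynomial.eval_pow, Polynomial.eval_X,
          ← pow_mul, mul_comm ((i : ℕ) + 1)]
      rw [Finset.sum_congr rfl fun b _ => this b]
      exact hrow i
    have hp0 : p = 0 :=
      Polynomial.eq_zero_of_natDegree_lt_card_of_eval_eq_zero p hfinj heval
        (by rwa [Fintype.card_fin])
    have hcoeff : p.coeff b₀.val = c (a₀, b₀) := by
      rw [hp, Polynomial.finset_sum_coeff]
      have : ∀ b : ZMod n,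
          (Polynomial.C (c (a₀, b)) * Polynomial.X ^ b.val).coeff b₀.val =
            if b = b₀ then c (a₀, b) else 0 := by
        intro b
        rw [Polynomial.coeff_C_mul, Polynomial.coeff_X_pow]
        have hbb : (b₀.val = b.val) = (b = b₀) :=
          propext ⟨fun h => ZMod.val_injective n h.symm, fun h => by rw [h]⟩
        simp only [hbb, mul_ite, mul_one, mul_zero]
      rw [Finset.sum_congr rfl fun b _ => this b]
      simp [Finset.sum_ite_eq']
    rw [hp0, Polynomial.coeff_zero] at hcoeff
    exact hcoeff.symm
  have hmul : ∀ g h : ZMod n × ZMod n, v g * v h = q ^ (g.2.val * h.1.val) • v (g + h) := by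
    intro g h
    simp only [hv]
    rw [mMul hn0 hq1]
    congr 1
    rw [mMod hn0 hq1 (g.1.val + h.1.val) (g.2.val + h.2.val)]
    simp [ZMod.val_add]
  have hsupp : {g | X g ≠ ⊥} = Set.univ := by
    ext g
    simp [hXv, Submodule.span_singleton_eq_bot, hvne g]
  refine ⟨?_, ?_, ?_, ?_, hsupp, ?_⟩
  · rw [hXv]
    exact hli.iSupIndep_span_singleton
  · rw [hXv, ← Submodule.span_range_eq_iSup]
    apply hli.span_eq_top_of_card_eq_finrank
    rw [Fintype.card_prod, ZMod.card, Module.finrank_matrix, Fintype.card_fin,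
      Module.finrank_self, mul_one]
  · intro g h
    rw [hXv]
    simp only
    rw [Submodule.span_mul_span, Set.singleton_mul_singleton, Submodule.span_le,
      Set.singleton_subset_iff]
    rw [hmul]
    exact Submodule.smul_mem _ _ (Submodule.mem_span_singleton_self _)
  · intro g
    rw [hXv]
    exact finrank_span_singleton (hvne g)
  · rw [hsupp]
    exact AddSubgroup.closure_univ
end

section
/- Let k be a field, n ≥ 1, G a group, and m : {1,…,n−1} → G any map. Then there exists a grading (X^g)_{g∈G} of the matrix algebra M_n(k) by G in which every elementary matrix E_{ji} is homogeneous, with deg E_{ii} = 1 for all i, deg E_{ji} = m(j−1)·m(j−2)⋯m(i) for j > i, and deg E_{ji} = (m(i−1)⋯m(j))^{-1} for j < i. Moreover this grading is connected if and only if the image of m generates G. -/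
/-!
Fix `d : Fin n → G` with `d (j + 1) = m j * d j`, and give the position `(j, i)` the degree
`d j * (d i)⁻¹`. Since `(d j * (d l)⁻¹) * (d l * (d i)⁻¹) = d j * (d i)⁻¹`, the matrices
supported on positions of degree `g` form a grading. Its support is the set of all `d j * (d i)⁻¹`, which
contains every `m t = d (t + 1) * (d t)⁻¹` and lies in the subgroup generated by the `m t`.
-/

open Matrix

/-- Cumulative product: `degAux m j = m (j-1) * m (j-2) * ⋯ * m 0`, so that
`degAux m j * (degAux m i)⁻¹ = m (j-1) ⋯ m i` for `j > i`,
`= (m (i-1) ⋯ m j)⁻¹` for `j < i`, and `= 1` for `j = i`. -/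
def degAux {G : Type*} [Group G] (m : ℕ → G) : ℕ → G
  | 0 => 1
  | (j + 1) => m j * degAux m j

open Pointwise

namespace Matrix

variable (R : Type*) [CommSemiring R] {ι G : Type*} [Group G] (d : ι → G)

def degSupported (S : Set G) : Submodule R (Matrix ι ι R) where
  carrier := {M | ∀ j i, d j * (d i)⁻¹ ∉ S → M j i = 0}
  add_mem' ha hb j i h := by simp [ha j i h, hb j i h]
  zero_mem' _ _ _ := rfl
  smul_mem' c M hM j i h := by simp [hM j i h]

variable {R d}

theorem degSupported_mono {S T : Set G} (hST : S ⊆ T) :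
    degSupported R d S ≤ degSupported R d T :=
  fun _ hM j i h => hM j i fun hS => h (hST hS)

theorem disjoint_degSupported {S T : Set G} (hST : Disjoint S T) :
    Disjoint (degSupported R d S) (degSupported R d T) := by
  rw [disjoint_iff, Submodule.eq_bot_iff]
  rintro M ⟨hMS, hMT⟩
  ext j i
  by_cases hS : d j * (d i)⁻¹ ∈ S
  · exact hMT j i (Set.disjoint_left.1 hST hS)
  · exact hMS j i hS

theorem single_mem_degSupported [DecidableEq ι] (j i : ι) (c : R) :
    single j i c ∈ degSupported R d {d j * (d i)⁻¹} := by
  rintro j' i' h'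
  rw [single_apply, if_neg]
  rintro ⟨rfl, rfl, -⟩
  exact h' rfl

theorem degSupported_mul_le [Fintype ι] [DecidableEq ι] (S T : Set G) :
    degSupported R d S * degSupported R d T ≤ degSupported R d (S * T) := by
  rw [Submodule.mul_le]
  intro A hA B hB j i hji
  rw [mul_apply]
  refine Finset.sum_eq_zero fun l _ => ?_
  by_cases hl : d j * (d l)⁻¹ ∈ S
  · have hli : d l * (d i)⁻¹ ∉ T := fun hli =>
      hji (Set.mem_mul.2 ⟨_, hl, _, hli, by group⟩)
    rw [hB l i hli, mul_zero]
  · rw [hA j l hl, zero_mul]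

variable (R d)

theorem iSupIndep_degSupported_singleton : iSupIndep fun g => degSupported R d {g} := fun g =>
  (disjoint_degSupported (S := {g}) (T := {g}ᶜ) (by simp)).mono_right
    (iSup₂_le fun _ hh => degSupported_mono (Set.singleton_subset_iff.2 hh))

theorem iSup_degSupported_singleton [Fintype ι] [DecidableEq ι] :
    ⨆ g, degSupported R d {g} = ⊤ := by
  refine eq_top_iff.2 fun M _ => ?_
  rw [matrix_eq_sum_single M]
  refine Submodule.sum_mem _ fun j _ => Submodule.sum_mem _ fun i _ => ?_
  exact Submodule.mem_iSup_of_mem _ (single_mem_degSupported j i (M j i))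

theorem setOf_degSupported_singleton_ne_bot [Nontrivial R] [DecidableEq ι] :
    {g | degSupported R d {g} ≠ ⊥} = Set.range fun p : ι × ι => d p.1 * (d p.2)⁻¹ := by
  ext g
  simp only [Set.mem_ofPred_eq, Set.mem_range, Prod.exists, ne_eq, Submodule.eq_bot_iff]
  constructor
  · intro hg
    by_contra! hcon
    exact hg fun M hM => ext fun j i => hM j i (hcon j i)
  · rintro ⟨j, i, rfl⟩ hbot
    simpa using congrFun₂ (hbot _ (single_mem_degSupported j i (1 : R))) j i

end Matrix

section degAux

variable {G : Type*} [Group G] (m : ℕ → G)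

theorem degAux_succ_mul_inv (t : ℕ) : degAux m (t + 1) * (degAux m t)⁻¹ = m t :=
  mul_inv_cancel_right _ _

theorem degAux_mem {H : Subgroup G} (hm : ∀ t, m t ∈ H) (t : ℕ) : degAux m t ∈ H := by
  induction t with
  | zero => exact H.one_mem
  | succ t ih => exact H.mul_mem (hm t) ih

end degAux

theorem closure_range_degAux_ratio {G : Type*} [Group G] {n : ℕ} (m : Fin (n - 1) → G) :
    Subgroup.closure (Set.range fun p : Fin n × Fin n =>
        degAux (fun t => if h : t < n - 1 then m ⟨t, h⟩ else 1) p.1 *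
          (degAux (fun t => if h : t < n - 1 then m ⟨t, h⟩ else 1) p.2)⁻¹) =
      Subgroup.closure (Set.range m) := by
  set m' : ℕ → G := fun t => if h : t < n - 1 then m ⟨t, h⟩ else 1
  have hm' : ∀ t, m' t ∈ Subgroup.closure (Set.range m) := fun t => by
    by_cases ht : t < n - 1
    · simpa [m', ht] using Subgroup.subset_closure (Set.mem_range_self _)
    · simp [m', ht]
  refine le_antisymm (Subgroup.closure_le _ |>.2 ?_) (Subgroup.closure_le _ |>.2 ?_)
  · rintro _ ⟨⟨j, i⟩, rfl⟩
    exact Subgroup.mul_mem _ (degAux_mem m' hm' j) (Subgroup.inv_mem _ (degAux_mem m' hm' i))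
  · rintro _ ⟨t, rfl⟩
    refine Subgroup.subset_closure ⟨(⟨t + 1, by omega⟩, ⟨t, by omega⟩), ?_⟩
    simp only [degAux_succ_mul_inv, m', t.isLt, dif_pos]

theorem stmt2_general (k : Type*) [Field k] (n : ℕ) (G : Type*) [Group G]
    (m : Fin (n - 1) → G) :
    ∃ X : G → Submodule k (Matrix (Fin n) (Fin n) k),
      iSupIndep X ∧ (⨆ g, X g) = ⊤ ∧
      (∀ g h, X g * X h ≤ X (g * h)) ∧
      (∀ i j : Fin n,
        Matrix.single j i (1 : k) ∈
          X (degAux (fun t => if h : t < n - 1 then m ⟨t, h⟩ else 1) (j : ℕ) *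
            (degAux (fun t => if h : t < n - 1 then m ⟨t, h⟩ else 1) (i : ℕ))⁻¹)) ∧
      (Subgroup.closure {g | X g ≠ ⊥} = ⊤ ↔ Subgroup.closure (Set.range m) = ⊤) := by
  set d : Fin n → G := fun i => degAux (fun t => if h : t < n - 1 then m ⟨t, h⟩ else 1) i
  refine ⟨fun g => degSupported k d {g}, iSupIndep_degSupported_singleton k d,
    iSup_degSupported_singleton k d, fun g h => ?_, fun i j => single_mem_degSupported j i 1, ?_⟩
  · simpa only [Set.singleton_mul_singleton] using degSupported_mul_le (R := k) (d := d) {g} {h}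
  · rw [setOf_degSupported_singleton_ne_bot, closure_range_degAux_ratio]

/-- For any field `k`, `n ≥ 1`, group `G` and map `m : {1,…,n-1} → G`, there exists a good
grading of `M_n(k)` by `G` with `deg E_{ji} = m(j−1)⋯m(i)` for `j > i`,
`deg E_{ji} = (m(i−1)⋯m(j))⁻¹` for `j < i` and `deg E_{ii} = 1`; it is connected iff the
image of `m` generates `G`. -/
theorem stmt2 (k : Type*) [Field k] (n : ℕ) (hn : 1 ≤ n) (G : Type*) [Group G]
    (m : Fin (n - 1) → G) :
    ∃ X : G → Submodule k (Matrix (Fin n) (Fin n) k),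
      iSupIndep X ∧ (⨆ g, X g) = ⊤ ∧
      (∀ g h, X g * X h ≤ X (g * h)) ∧
      (∀ i j : Fin n,
        Matrix.single j i (1 : k) ∈
          X (degAux (fun t => if h : t < n - 1 then m ⟨t, h⟩ else 1) (j : ℕ) *
            (degAux (fun t => if h : t < n - 1 then m ⟨t, h⟩ else 1) (i : ℕ))⁻¹)) ∧
      (Subgroup.closure {g | X g ≠ ⊥} = ⊤ ↔ Subgroup.closure (Set.range m) = ⊤) :=
  stmt2_general k n G m
end

section
/- Let k be a field, n ≥ 1, and let (X^g)_{g∈G} be a grading of M_n(k) by a group G in which every elementary matrix E_{ji} is homogeneous (a good grading). Then deg E_{ii} = 1 for every i, deg E_{ij} = (deg E_{ji})^{-1} for all i,j, and for all j > i one has deg E_{ji} = (deg E_{j,j−1})·(deg E_{j−1,j−2})⋯(deg E_{i+1,i}). Consequently, if the grading is connected then G is generated by the set {deg E_{i+1,i} : 1 ≤ i ≤ n−1}. -/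
/-!
Multiplying `E_{ab}` by `E_{bc}` gives `E_{ac}`, so the degrees `d j i` of the elementary
matrices satisfy the cocycle rule `d a b * d b c = d a c`; the diagonal, inverse and chain
formulas are pure group theory from there. If `x` is homogeneous of degree `g` with
`x j i ≠ 0`, then `E_{jj} x E_{ii} = x j i • E_{ji}` is a nonzero element of degrees both
`d j j * g * d i i = g` and `d j i`. So the support consists of degrees of elementary matrices,
which are products of subdiagonal degrees and their inverses.
-/

open Matrix

/-- The telescoping product `chainProd d i j = d j (j-1) * d (j-1) (j-2) * ⋯ * d (i+1) i`
(for `i ≤ j`). -/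
def chainProd {G : Type*} [Group G] (d : ℕ → ℕ → G) (i j : ℕ) : G :=
  (((List.range' i (j - i)).reverse).map (fun t => d (t + 1) t)).prod

section Cocycle

variable {G : Type*} [Group G] {d : ℕ → ℕ → G} {n : ℕ}

theorem chainProd_self (d : ℕ → ℕ → G) (i : ℕ) : chainProd d i i = 1 := by
  simp [chainProd]

theorem chainProd_succ (d : ℕ → ℕ → G) {i j : ℕ} (hij : i ≤ j) :
    chainProd d i (j + 1) = d (j + 1) j * chainProd d i j := by
  rw [chainProd, chainProd, Nat.sub_add_comm hij, List.range'_1_concat, Nat.add_sub_cancel' hij]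
  simp

theorem chainProd_mem_closure {i j : ℕ} (hj : j < n) :
    chainProd d i j ∈ Subgroup.closure {g | ∃ t, t + 1 < n ∧ g = d (t + 1) t} := by
  refine list_prod_mem fun x hx => ?_
  simp only [List.mem_map, List.mem_reverse, List.mem_range'_1] at hx
  obtain ⟨t, ht, rfl⟩ := hx
  exact Subgroup.subset_closure ⟨t, by omega, rfl⟩

theorem cocycle_diag_eq_one (hrel : ∀ a b c : Fin n, d a b * d b c = d a c) (i : Fin n) :
    d i i = 1 :=
  mul_eq_left.mp (hrel i i i)

theorem cocycle_eq_inv (hrel : ∀ a b c : Fin n, d a b * d b c = d a c) (i j : Fin n) :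
    d i j = (d j i)⁻¹ :=
  eq_inv_of_mul_eq_one_left <| by rw [hrel, cocycle_diag_eq_one hrel]

theorem cocycle_eq_chainProd (hrel : ∀ a b c : Fin n, d a b * d b c = d a c) {i j : ℕ}
    (hij : i ≤ j) (hj : j < n) : d j i = chainProd d i j := by
  induction j, hij using Nat.le_induction with
  | base => rw [chainProd_self]; exact cocycle_diag_eq_one hrel ⟨i, hj⟩
  | succ j hij ih =>
    rw [chainProd_succ d hij, ← ih (by omega)]
    exact (hrel ⟨j + 1, hj⟩ ⟨j, by omega⟩ ⟨i, by omega⟩).symm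

theorem cocycle_mem_closure_subdiag (hrel : ∀ a b c : Fin n, d a b * d b c = d a c)
    (i j : Fin n) : d j i ∈ Subgroup.closure {g | ∃ t, t + 1 < n ∧ g = d (t + 1) t} := by
  rcases le_total (i : ℕ) j with hij | hji
  · rw [cocycle_eq_chainProd hrel hij j.isLt]
    exact chainProd_mem_closure j.isLt
  · rw [cocycle_eq_inv hrel, cocycle_eq_chainProd hrel hji i.isLt]
    exact inv_mem (chainProd_mem_closure i.isLt)

end Cocycle

theorem iSupIndep.eq_of_mem_of_mem {R M ι : Type*} [Ring R] [AddCommGroup M] [Module R M]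
    {X : ι → Submodule R M} (hind : iSupIndep X) {g h : ι} {x : M} (hx : x ≠ 0)
    (hg : x ∈ X g) (hh : x ∈ X h) : g = h := by
  by_contra hgh
  exact hx (Submodule.disjoint_def.mp (hind.pairwiseDisjoint hgh) x hg hh)

theorem Matrix.single_ne_zero {m n α : Type*} [DecidableEq m] [DecidableEq n] [Zero α]
    {a : α} (ha : a ≠ 0) (i : m) (j : n) : single i j a ≠ 0 :=
  fun h => ha (by simpa using congrFun (congrFun h i) j)

section GoodGrading

variable {k : Type*} [CommRing k] [Nontrivial k] {n : ℕ} {G : Type*} [Group G]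
  {X : G → Submodule k (Matrix (Fin n) (Fin n) k)} {d : ℕ → ℕ → G}

theorem goodGrading_degree_mul (hind : iSupIndep X) (hmul : ∀ g h, X g * X h ≤ X (g * h))
    (hd : ∀ i j : Fin n, single j i (1 : k) ∈ X (d j i)) (a b c : Fin n) :
    d a b * d b c = d a c := by
  have hac : single a c (1 : k) ∈ X (d a b * d b c) := by
    simpa using hmul _ _ (Submodule.mul_mem_mul (hd b a) (hd c b))
  exact hind.eq_of_mem_of_mem (single_ne_zero one_ne_zero a c) hac (hd c a)

theorem goodGrading_degree_eq_of_apply_ne_zero (hind : iSupIndep X)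
    (hmul : ∀ g h, X g * X h ≤ X (g * h))
    (hd : ∀ i j : Fin n, single j i (1 : k) ∈ X (d j i)) {g : G}
    {x : Matrix (Fin n) (Fin n) k} (hx : x ∈ X g) {i j : Fin n} (hji : x j i ≠ 0) :
    d j i = g := by
  have hrel := goodGrading_degree_mul hind hmul hd
  have hleft : single j j 1 * x ∈ X (d j j * g) := hmul _ _ (Submodule.mul_mem_mul (hd j j) hx)
  have hsandwich : single j i (x j i) ∈ X g := by
    simpa [cocycle_diag_eq_one hrel] using hmul _ _ (Submodule.mul_mem_mul hleft (hd i i))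
  have hsingle : single j i (x j i) ∈ X (d j i) := by
    simpa [smul_single] using Submodule.smul_mem _ (x j i) (hd i j)
  exact hind.eq_of_mem_of_mem (single_ne_zero hji j i) hsingle hsandwich

theorem goodGrading_closure_support_le (hind : iSupIndep X)
    (hmul : ∀ g h, X g * X h ≤ X (g * h))
    (hd : ∀ i j : Fin n, single j i (1 : k) ∈ X (d j i)) :
    Subgroup.closure {g | X g ≠ ⊥} ≤
      Subgroup.closure {g | ∃ t, t + 1 < n ∧ g = d (t + 1) t} := by
  refine (Subgroup.closure_le _).mpr fun g hg => ?_
  obtain ⟨x, hxg, hx0⟩ := Submodule.exists_mem_ne_zero_of_ne_bot hg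
  obtain ⟨j, i, hji⟩ : ∃ j i, x j i ≠ 0 := by
    by_contra! h
    exact hx0 (Matrix.ext h)
  rw [← goodGrading_degree_eq_of_apply_ne_zero hind hmul hd hxg hji]
  exact cocycle_mem_closure_subdiag (goodGrading_degree_mul hind hmul hd) i j

end GoodGrading

theorem stmt3_general (k : Type*) [Field k] (n : ℕ) (G : Type*) [Group G]
    (X : G → Submodule k (Matrix (Fin n) (Fin n) k))
    (hind : iSupIndep X)
    (hmul : ∀ g h, X g * X h ≤ X (g * h))
    (d : ℕ → ℕ → G)
    (hd : ∀ i j : Fin n, Matrix.single j i (1 : k) ∈ X (d (j : ℕ) (i : ℕ))) :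
    (∀ i : Fin n, d (i : ℕ) (i : ℕ) = 1) ∧
    (∀ i j : Fin n, d (i : ℕ) (j : ℕ) = (d (j : ℕ) (i : ℕ))⁻¹) ∧
    (∀ i j : Fin n, (i : ℕ) < (j : ℕ) → d (j : ℕ) (i : ℕ) = chainProd d (i : ℕ) (j : ℕ)) ∧
    (Subgroup.closure {g | X g ≠ ⊥} = ⊤ →
      Subgroup.closure {g | ∃ i : ℕ, i + 1 < n ∧ g = d (i + 1) i} = ⊤) := by
  have hrel := goodGrading_degree_mul hind hmul hd
  refine ⟨cocycle_diag_eq_one hrel, cocycle_eq_inv hrel,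
    fun i j hij => cocycle_eq_chainProd hrel hij.le j.isLt, fun hcon => ?_⟩
  rw [eq_top_iff, ← hcon]
  exact goodGrading_closure_support_le hind hmul hd

/-- If `(X^g)_{g∈G}` is a good grading of `M_n(k)` (every elementary matrix `E_{ji}` is
homogeneous, say of degree `d j i`), then `deg E_{ii} = 1`, `deg E_{ij} = (deg E_{ji})⁻¹`,
for `j > i` one has `deg E_{ji} = (deg E_{j,j−1})·(deg E_{j−1,j−2})⋯(deg E_{i+1,i})`, and
if the grading is connected then `G` is generated by the subdiagonal degrees
`{deg E_{i+1,i} : 1 ≤ i ≤ n−1}`. -/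
theorem stmt3 (k : Type*) [Field k] (n : ℕ) (hn : 1 ≤ n) (G : Type*) [Group G]
    (X : G → Submodule k (Matrix (Fin n) (Fin n) k))
    (hind : iSupIndep X) (hsup : (⨆ g, X g) = ⊤)
    (hmul : ∀ g h, X g * X h ≤ X (g * h))
    (d : ℕ → ℕ → G)
    (hd : ∀ i j : Fin n, Matrix.single j i (1 : k) ∈ X (d (j : ℕ) (i : ℕ))) :
    (∀ i : Fin n, d (i : ℕ) (i : ℕ) = 1) ∧
    (∀ i j : Fin n, d (i : ℕ) (j : ℕ) = (d (j : ℕ) (i : ℕ))⁻¹) ∧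
    (∀ i j : Fin n, (i : ℕ) < (j : ℕ) → d (j : ℕ) (i : ℕ) = chainProd d (i : ℕ) (j : ℕ)) ∧
    (Subgroup.closure {g | X g ≠ ⊥} = ⊤ →
      Subgroup.closure {g | ∃ i : ℕ, i + 1 < n ∧ g = d (i + 1) i} = ⊤) :=
  stmt3_general k n G X hind hmul d hd
end

section
/- Let p be a prime, k a field of characteristic p, and A = k[x]/(x^p) the truncated polynomial algebra. If a group G admits a connected grading of A (a grading whose support generates G), then G is cyclic. -/
/-!
Let `π : A → k` be evaluation at `0`, with kernel `m = (x)`. Either some homogeneous `v` of degree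
`g ≠ 1` has `π v ≠ 0`: normalising to `π v = 1`, Frobenius gives `v ^ p = (v - 1) ^ p + 1 = 1`, so
`g` has order `p` and the `p` powers `v ^ i`, lying in distinct degrees, form a basis of `A`.
Or every homogeneous element of nontrivial degree lies in `m`: then some homogeneous `y` lies in
`m \ m²` (otherwise `x ∈ m²`), so `m = (y)` and `A = k + y A`, which forces `A` to be spanned by
the powers of `y`. Either way `A = ⨆ n, X (g ^ n)` for a single `g`, so the support lies in `⟨g⟩`.
-/

open Module Polynomial

structure IsGrading {k A G : Type*} [CommSemiring k] [Semiring A] [Algebra k A] [Group G]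
    (X : G → Submodule k A) : Prop where
  indep : iSupIndep X
  iSup_eq_top : ⨆ g, X g = ⊤
  mul_le : ∀ g h, X g * X h ≤ X (g * h)

namespace IsGrading

variable {k A G : Type*} [CommSemiring k] [Semiring A] [Algebra k A] [Group G]
  {X : G → Submodule k A}

theorem mul_mem (hX : IsGrading X) {g h : G} {a b : A} (ha : a ∈ X g) (hb : b ∈ X h) :
    a * b ∈ X (g * h) :=
  hX.mul_le g h (Submodule.mul_mem_mul ha hb)

theorem mem_sup_iSup_ne (hX : IsGrading X) (a : A) (g : G) :
    a ∈ X g ⊔ ⨆ (h) (_ : h ≠ g), X h := by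
  rw [← iSup_split_single, hX.iSup_eq_top]
  trivial

theorem eq_zero_of_mem_of_mem_iSup_ne (hX : IsGrading X) {g : G} {a : A} (ha : a ∈ X g)
    (ha' : a ∈ ⨆ (h) (_ : h ≠ g), X h) : a = 0 :=
  Submodule.disjoint_def.mp (hX.indep g) a ha ha'

theorem eq_of_mem_of_mem (hX : IsGrading X) {g h : G} {a : A} (hg : a ∈ X g) (hh : a ∈ X h)
    (ha : a ≠ 0) : g = h := by
  by_contra hne
  exact ha (hX.eq_zero_of_mem_of_mem_iSup_ne hg (Submodule.mem_iSup_of_mem h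
    (Submodule.mem_iSup_of_mem (Ne.symm hne) hh)))

theorem mul_mem_iSup_ne (hX : IsGrading X) {g h₀ : G} {a r : A} (ha : a ∈ X g)
    (hr : r ∈ ⨆ (h) (_ : h ≠ h₀), X h) : a * r ∈ ⨆ (j) (_ : j ≠ g * h₀), X j := by
  have hmap : (⨆ (h) (_ : h ≠ h₀), X h).map (LinearMap.mulLeft k a) ≤
      ⨆ (j) (_ : j ≠ g * h₀), X j := by
    simp only [Submodule.map_iSup]
    refine iSup₂_le fun h hh => ?_
    rintro _ ⟨b, hb, rfl⟩
    exact Submodule.mem_iSup_of_mem (g * h)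
      (Submodule.mem_iSup_of_mem (by simpa using hh) (hX.mul_mem ha hb))
  exact hmap ⟨r, hr, rfl⟩

section Ring

variable {k A G : Type*} [CommRing k] [Ring A] [Algebra k A] [Group G] {X : G → Submodule k A}

/-- Writing `1 = e + r` with `e` of degree `1`, comparing degree-`g` parts of `a = a * e + a * r`
shows that `e` is a right unit on homogeneous elements, hence `e = 1`. -/
theorem one_mem (hX : IsGrading X) : (1 : A) ∈ X 1 := by
  obtain ⟨e, he, r, hr, her⟩ := Submodule.mem_sup.mp (hX.mem_sup_iSup_ne 1 1)
  have hmul_e : ∀ g, ∀ a ∈ X g, a * e = a := by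
    intro g a ha
    have hdeg : a - a * e ∈ X g := sub_mem ha (by simpa using hX.mul_mem ha he)
    have hrest : a - a * e ∈ ⨆ (j) (_ : j ≠ g), X j := by
      have : a - a * e = a * r := by rw [sub_eq_iff_eq_add, ← mul_add, add_comm, her, mul_one]
      simpa [this] using hX.mul_mem_iSup_ne ha hr
    exact (sub_eq_zero.mp (hX.eq_zero_of_mem_of_mem_iSup_ne hdeg hrest)).symm
  have hmul_e_all : ∀ a : A, a * e = a := fun a =>
    Submodule.iSup_induction X (motive := fun a => a * e = a)
      (hX.iSup_eq_top ▸ Submodule.mem_top) hmul_e (zero_mul e)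
      fun a b ha hb => by rw [add_mul, ha, hb]
  obtain rfl : e = 1 := by simpa using hmul_e_all 1
  exact he

theorem pow_mem (hX : IsGrading X) {g : G} {a : A} (ha : a ∈ X g) (n : ℕ) :
    a ^ n ∈ X (g ^ n) := by
  induction n with
  | zero => simpa using hX.one_mem
  | succ n ih => simpa [pow_succ] using hX.mul_mem ih ha

end Ring

end IsGrading

theorem Submodule.eq_top_of_isNilpotent_of_forall_eq_add_mul {k A : Type*} [Semiring k]
    [Semiring A] [Module k A] {N : Submodule k A} {y : A} (hy : IsNilpotent y)
    (hyN : ∀ b ∈ N, y * b ∈ N) (hcov : ∀ a, ∃ b ∈ N, ∃ c, a = b + y * c) : N = ⊤ := by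
  obtain ⟨n, hn⟩ := hy
  have hpow : ∀ m, ∀ b ∈ N, y ^ m * b ∈ N := by
    intro m
    induction m with
    | zero => simp
    | succ m ih => intro b hb; rw [pow_succ, mul_assoc]; exact ih _ (hyN b hb)
  have hcov_pow : ∀ m a, ∃ b ∈ N, ∃ c, a = b + y ^ m * c := by
    intro m
    induction m with
    | zero => exact fun a => ⟨0, N.zero_mem, a, by simp⟩
    | succ m ih =>
      intro a
      obtain ⟨b, hb, c, rfl⟩ := ih a
      obtain ⟨b', hb', c', rfl⟩ := hcov c
      exact ⟨b + y ^ m * b', N.add_mem hb (hpow m b' hb'), c', by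
        rw [mul_add, ← add_assoc, ← mul_assoc, ← pow_succ]⟩
  refine eq_top_iff.mpr fun a _ => ?_
  obtain ⟨b, hb, c, rfl⟩ := hcov_pow n a
  simpa [hn] using hb

theorem isCyclic_of_iSup_pow_eq_top {k M G : Type*} [Semiring k] [AddCommMonoid M] [Module k M]
    [Group G] {X : G → Submodule k M} (hind : iSupIndep X)
    (hconn : Subgroup.closure {g | X g ≠ ⊥} = ⊤) {g : G} (hg : ⨆ n : ℕ, X (g ^ n) = ⊤) :
    IsCyclic G := by
  refine isCyclic_iff_exists_zpowers_eq_top.mpr ⟨g, top_le_iff.mp ?_⟩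
  rw [← hconn, Subgroup.closure_le]
  intro h hh
  by_contra hnot
  refine hh ((hind h).eq_bot_of_le (hg ▸ le_top |>.trans (iSup_le fun n => ?_)))
  refine le_iSup₂_of_le (g ^ n) ?_ le_rfl
  rintro rfl
  exact hnot (Subgroup.npow_mem_zpowers g n)

section LocalAlgebra

variable {k A : Type*} [Field k] [CommRing A] [Algebra k A] {π : A →ₐ[k] k} {x : A}

theorem isUnit_of_apply_ne_zero (hx : IsNilpotent x) (hker : ∀ a, π a = 0 ↔ x ∣ a) {a : A}
    (ha : π a ≠ 0) : IsUnit a := by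
  obtain ⟨c, hc⟩ := (hker (a - algebraMap k A (π a))).mp (by simp)
  have hnil : IsNilpotent (x * c) := (Commute.all x c).isNilpotent_mul_right hx
  rw [← sub_add_cancel a (algebraMap k A (π a)), hc]
  exact hnil.isUnit_add_right_of_commute ((isUnit_iff_ne_zero.mpr ha).map (algebraMap k A))
    (Commute.all _ _)

theorem pow_eq_zero_of_apply_eq_zero {p : ℕ} (hxp : x ^ p = 0) (hker : ∀ a, π a = 0 ↔ x ∣ a)
    {a : A} (ha : π a = 0) : a ^ p = 0 := by
  obtain ⟨c, rfl⟩ := (hker a).mp ha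
  rw [mul_pow, hxp, zero_mul]

theorem pow_char_eq_one {p : ℕ} [Fact p.Prime] [CharP k p] (hxp : x ^ p = 0)
    (hker : ∀ a, π a = 0 ↔ x ∣ a) {u : A} (hu : π u = 1) : u ^ p = 1 := by
  have : Nontrivial A := π.toRingHom.domain_nontrivial
  have : CharP A p := charP_of_injective_algebraMap (algebraMap k A).injective p
  have h := pow_eq_zero_of_apply_eq_zero hxp hker (a := u - 1) (by simp [hu])
  rwa [sub_pow_char, one_pow, sub_eq_zero] at h

theorem not_sq_dvd_self (hx0 : x ≠ 0) (hx : IsNilpotent x) (hker : ∀ a, π a = 0 ↔ x ∣ a) :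
    ¬ x ^ 2 ∣ x := by
  rintro ⟨b, hb⟩
  have hu : IsUnit (1 - x * b) :=
    isUnit_of_apply_ne_zero hx hker (by simp [(hker x).mpr dvd_rfl])
  refine hx0 (hu.mul_left_eq_zero.mp ?_)
  linear_combination hb

theorem apply_eq_zero_iff_dvd_of_not_sq_dvd (hx : IsNilpotent x) (hker : ∀ a, π a = 0 ↔ x ∣ a)
    {y : A} (hy : π y = 0) (hy2 : ¬ x ^ 2 ∣ y) (a : A) : π a = 0 ↔ y ∣ a := by
  obtain ⟨w, rfl⟩ := (hker y).mp hy
  have hw : IsUnit w := isUnit_of_apply_ne_zero hx hker fun hw =>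
    hy2 (by rw [sq]; exact mul_dvd_mul_left x ((hker w).mp hw))
  rw [hker, (associated_mul_unit_right x w hw).dvd_iff_dvd_left]

end LocalAlgebra

section GradedLocalAlgebra

variable {k A G : Type*} [Field k] [CommRing A] [Algebra k A] [Group G] {X : G → Submodule k A}
  {π : A →ₐ[k] k} {x : A}

theorem IsGrading.iSup_pow_eq_top_of_mem (hX : IsGrading X) {g : G} (hxg : x ∈ X g)
    (hx : IsNilpotent x) (hker : ∀ a, π a = 0 ↔ x ∣ a) : ⨆ n : ℕ, X (g ^ n) = ⊤ := by
  refine Submodule.eq_top_of_isNilpotent_of_forall_eq_add_mul hx (fun b hb => ?_) fun a => ?_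
  · refine Submodule.iSup_induction _ (motive := fun b => x * b ∈ ⨆ n : ℕ, X (g ^ n)) hb
      (fun n b hb => Submodule.mem_iSup_of_mem (n + 1) ?_) (by simp)
      fun b c hb hc => by rw [mul_add]; exact add_mem hb hc
    rw [pow_succ']
    exact hX.mul_mem hxg hb
  · obtain ⟨c, hc⟩ := (hker (a - algebraMap k A (π a))).mp (by simp)
    refine ⟨algebraMap k A (π a), Submodule.mem_iSup_of_mem 0 ?_, c, by rw [← hc]; abel⟩
    rw [Algebra.algebraMap_eq_smul_one, pow_zero]
    exact Submodule.smul_mem _ _ hX.one_mem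

theorem IsGrading.iSup_pow_eq_top_of_apply_ne_zero {p : ℕ} [Fact p.Prime] [CharP k p]
    (hX : IsGrading X) (hfr : finrank k A = p) (hxp : x ^ p = 0)
    (hker : ∀ a, π a = 0 ↔ x ∣ a) {g : G} (hg : g ≠ 1) {v : A} (hvg : v ∈ X g) (hv : π v ≠ 0) :
    ⨆ n : ℕ, X (g ^ n) = ⊤ := by
  set u := (π v)⁻¹ • v
  have hug : u ∈ X g := Submodule.smul_mem _ _ hvg
  have hu : π u = 1 := by simp [u, hv]
  have : Nontrivial A := π.toRingHom.domain_nontrivial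
  have hgp : g ^ p = 1 :=
    hX.eq_of_mem_of_mem (pow_char_eq_one hxp hker hu ▸ hX.pow_mem hug p) hX.one_mem one_ne_zero
  have hord : orderOf g = p := orderOf_eq_prime hgp hg
  have hinj : Function.Injective fun i : Fin p => g ^ (i : ℕ) := fun i j hij =>
    Fin.ext (pow_injOn_Iio_orderOf (by simp [hord]) (by simp [hord]) hij)
  have hli : LinearIndependent k fun i : Fin p => u ^ (i : ℕ) :=
    (hX.indep.comp hinj).linearIndependent _ (fun i => hX.pow_mem hug i)
      fun i h => by simpa [hu] using congrArg π h
  have : NeZero p := ⟨(Fact.out : p.Prime).ne_zero⟩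
  refine eq_top_iff.mpr ((hli.span_eq_top_of_card_eq_finrank (by simp [hfr])).ge.trans ?_)
  rw [Submodule.span_le]
  rintro _ ⟨i, rfl⟩
  exact Submodule.mem_iSup_of_mem (i : ℕ) (hX.pow_mem hug i)

theorem IsGrading.exists_mem_not_sq_dvd (hX : IsGrading X) (hx0 : x ≠ 0) (hx : IsNilpotent x)
    (hker : ∀ a, π a = 0 ↔ x ∣ a) (hunit : ∀ g ≠ 1, ∀ v ∈ X g, π v = 0) :
    ∃ g, ∃ y ∈ X g, π y = 0 ∧ ¬ x ^ 2 ∣ y := by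
  by_contra! h
  obtain ⟨e, he, r, hr, her⟩ := Submodule.mem_sup.mp (hX.mem_sup_iSup_ne x 1)
  have hrM : x ^ 2 ∣ r := Ideal.mem_span_singleton.mp <| (iSup₂_le fun g hg y hy =>
    Ideal.mem_span_singleton.mpr (h g y hy (hunit g hg y hy)) :
      _ ≤ (Ideal.span {x ^ 2}).restrictScalars k) hr
  have hπr : π r = 0 := (hker r).mpr ((dvd_pow_self x two_ne_zero).trans hrM)
  have hπe : π e = 0 := by simpa [← her, hπr] using (hker x).mpr dvd_rfl
  have hx2 := dvd_add (h 1 e he hπe) hrM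
  rw [her] at hx2
  exact not_sq_dvd_self hx0 hx hker hx2

theorem IsGrading.exists_iSup_pow_eq_top {p : ℕ} [Fact p.Prime] [CharP k p] (hX : IsGrading X)
    (hfr : finrank k A = p) (hx0 : x ≠ 0) (hxp : x ^ p = 0) (hker : ∀ a, π a = 0 ↔ x ∣ a) :
    ∃ g, ⨆ n : ℕ, X (g ^ n) = ⊤ := by
  by_cases hunit : ∃ g ≠ 1, ∃ v ∈ X g, π v ≠ 0
  · obtain ⟨g, hg, v, hvg, hv⟩ := hunit
    exact ⟨g, hX.iSup_pow_eq_top_of_apply_ne_zero hfr hxp hker hg hvg hv⟩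
  push Not at hunit
  obtain ⟨g, y, hyg, hy, hy2⟩ := hX.exists_mem_not_sq_dvd hx0 ⟨p, hxp⟩ hker hunit
  exact ⟨g, hX.iSup_pow_eq_top_of_mem hyg ⟨p, pow_eq_zero_of_apply_eq_zero hxp hker hy⟩
    (apply_eq_zero_iff_dvd_of_not_sq_dvd ⟨p, hxp⟩ hker hy hy2)⟩

end GradedLocalAlgebra

section TruncatedPolynomial

variable {k : Type*} [Field k] {p : ℕ}

theorem exists_algHom_eq_zero_iff_mk_X_dvd (hp : p ≠ 0) :
    ∃ π : k[X] ⧸ Ideal.span {(X : k[X]) ^ p} →ₐ[k] k,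
      ∀ a, π a = 0 ↔ Ideal.Quotient.mk _ X ∣ a := by
  let π : k[X] ⧸ Ideal.span {(X : k[X]) ^ p} →ₐ[k] k :=
    Ideal.Quotient.liftₐ _ (aeval 0) fun q hq => by
      obtain ⟨c, rfl⟩ := Ideal.mem_span_singleton.mp hq
      simp [hp]
  have hπ : ∀ q, π (Ideal.Quotient.mk _ q) = q.coeff 0 := fun q => by
    simp [π, Ideal.Quotient.liftₐ_apply, coeff_zero_eq_eval_zero]
  refine ⟨π, fun a => ⟨fun ha => ?_, fun ⟨c, hc⟩ => ?_⟩⟩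
  · obtain ⟨q, rfl⟩ := Ideal.Quotient.mk_surjective a
    exact map_dvd _ (X_dvd_iff.mpr (hπ q ▸ ha))
  · rw [hc, map_mul, hπ, coeff_X_zero, zero_mul]

theorem mk_X_pow_eq_zero : (Ideal.Quotient.mk (Ideal.span {(X : k[X]) ^ p}) X) ^ p = 0 := by
  rw [← map_pow, Ideal.Quotient.eq_zero_iff_mem]
  exact Ideal.mem_span_singleton_self _

theorem mk_X_ne_zero (hp : 1 < p) : Ideal.Quotient.mk (Ideal.span {(X : k[X]) ^ p}) X ≠ 0 := by
  rw [Ne, Ideal.Quotient.eq_zero_iff_mem, Ideal.mem_span_singleton, X_pow_dvd_iff]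
  intro h
  simpa using h 1 hp

end TruncatedPolynomial

/-- Let `p` be a prime, `k` a field of characteristic `p` and `A = k[x]/(x^p)`.  If a group
`G` admits a connected grading of `A` (a grading whose support generates `G`), then `G` is
cyclic. -/
theorem stmt6 (p : ℕ) (hp : p.Prime) (k : Type*) [Field k] (hchar : CharP k p)
    (G : Type*) [Group G]
    (X : G → Submodule k (Polynomial k ⧸ (Ideal.span {Polynomial.X ^ p} : Ideal (Polynomial k))))
    (hind : iSupIndep X) (hsup : (⨆ g, X g) = ⊤)
    (hmul : ∀ g h, X g * X h ≤ X (g * h))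
    (hconn : Subgroup.closure {g | X g ≠ ⊥} = ⊤) :
    IsCyclic G := by
  have : Fact p.Prime := ⟨hp⟩
  obtain ⟨π, hker⟩ := exists_algHom_eq_zero_iff_mk_X_dvd (k := k) hp.ne_zero
  obtain ⟨g, hg⟩ := IsGrading.exists_iSup_pow_eq_top ⟨hind, hsup, hmul⟩
    (finrank_quotient_span_eq_natDegree.trans (natDegree_X_pow p)) (mk_X_ne_zero hp.one_lt)
    mk_X_pow_eq_zero hker
  exact isCyclic_of_iSup_pow_eq_top hind hconn hg
end

section
/- Let p be a prime, k a field of characteristic p, and A = k[x]/(x^p); write x̄ for the class of x in A. Let (X^g)_{g∈G} be a grading of A by a group G, and suppose the component of trivial degree X^1 contains an element of the form x̄ + u with u in the ideal generated by x̄². Then x̄ ∈ X^1; in fact the grading restricted to its support is trivial: X^1 = A and X^g = 0 for all g ≠ 1. -/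
/-!
In a group-graded algebra the unit always lies in the trivial component, so `X 1` is a
subalgebra. It contains `t = x̄ + u`; since `t ≡ x̄` modulo `x̄²` and `x̄` is nilpotent, the
approximations `A = k[t] + x̄ᵐ A` improve with `m` until `x̄ᵐ = 0`, so `t` generates `A`. Hence
`X 1 = A`, and independence of the components kills all the others.
-/

section GroupGrading

variable {R A G : Type*} [CommRing R] [Ring A] [Algebra R A] [Group G] {X : G → Submodule R A}

theorem mul_eq_self_of_mem_grading (hind : iSupIndep X) (hmul : ∀ g h, X g * X h ≤ X (g * h))
    {v : G →₀ A} (hv : ∀ g, v g ∈ X g) (hsum : v.sum (fun _ x => x) = 1)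
    {h : G} {a : A} (ha : a ∈ X h) : v 1 * a = a := by
  classical
  set s := insert 1 v.support
  have hsum_insert : ∑ g ∈ s, v g = 1 := by
    rw [← hsum]
    exact (Finsupp.sum_of_support_subset v (Finset.subset_insert _ _) (fun _ x => x)
      fun _ _ => rfl).symm
  have hdiff : a - v 1 * a = ∑ g ∈ s.erase 1, v g * a := by
    calc a - v 1 * a = (∑ g ∈ s, v g) * a - v 1 * a := by rw [hsum_insert, one_mul]
      _ = _ := by
        rw [← Finset.add_sum_erase s _ (Finset.mem_insert_self 1 _), add_mul, Finset.sum_mul,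
          add_sub_cancel_left]
  -- `v g * a ∈ X (g * h)`, so the terms of `a = ∑ v g * a` with `g ≠ 1` lie outside degree h
  have hother : a - v 1 * a ∈ ⨆ (j) (_ : j ≠ h), X j := by
    rw [hdiff]
    refine Submodule.sum_mem _ fun g hg => ?_
    have hgh : g * h ≠ h := mul_ne_right.mpr (Finset.ne_of_mem_erase hg)
    exact Submodule.mem_iSup_of_mem (g * h) <| Submodule.mem_iSup_of_mem hgh <|
      hmul g h (Submodule.mul_mem_mul (hv g) ha)
  have hmem : a - v 1 * a ∈ X h := by
    refine (X h).sub_mem ha ?_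
    simpa using hmul 1 h (Submodule.mul_mem_mul (hv 1) ha)
  have hzero : a - v 1 * a = 0 := (Submodule.mem_bot R).mp <| (hind h).le_bot ⟨hmem, hother⟩
  exact (sub_eq_zero.mp hzero).symm

theorem one_mem_grading_one (hind : iSupIndep X) (hsup : ⨆ g, X g = ⊤)
    (hmul : ∀ g h, X g * X h ≤ X (g * h)) : (1 : A) ∈ X 1 := by
  obtain ⟨v, hv, hsum⟩ :=
    (Submodule.mem_iSup_iff_exists_finsupp X 1).mp (hsup ▸ Submodule.mem_top)
  have hleft : ∀ a : A, v 1 * a = a := fun a =>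
    Submodule.iSup_induction X (motive := fun a => v 1 * a = a) (hsup ▸ Submodule.mem_top)
      (fun _ _ ha => mul_eq_self_of_mem_grading hind hmul hv hsum ha) (mul_zero _)
      fun _ _ hx hy => by rw [mul_add, hx, hy]
  rw [← hleft 1, mul_one]
  exact hv 1

def gradingOneSubalgebra (hind : iSupIndep X) (hsup : ⨆ g, X g = ⊤)
    (hmul : ∀ g h, X g * X h ≤ X (g * h)) : Subalgebra R A :=
  (X 1).toSubalgebra (one_mem_grading_one hind hsup hmul) fun _ _ hx hy => by
    simpa using hmul 1 1 (Submodule.mul_mem_mul hx hy)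

theorem grading_one_eq_top_of_adjoin_eq_top (hind : iSupIndep X) (hsup : ⨆ g, X g = ⊤)
    (hmul : ∀ g h, X g * X h ≤ X (g * h)) {s : Set A} (hs : Algebra.adjoin R s = ⊤)
    (hsX : s ⊆ X 1) : X 1 = ⊤ := by
  have := Algebra.adjoin_le (S := gradingOneSubalgebra hind hsup hmul) hsX
  rw [hs, top_le_iff] at this
  exact congrArg Subalgebra.toSubmodule this

end GroupGrading

section NilpotentGenerator

variable {R A : Type*} [CommRing R] [CommRing A] [Algebra R A] {ξ : A}

theorem exists_eq_algebraMap_add_mul_of_adjoin_eq_top (hgen : Algebra.adjoin R {ξ} = ⊤)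
    (a : A) : ∃ (c : R) (b : A), a = algebraMap R A c + ξ * b := by
  obtain ⟨f, rfl⟩ : ∃ f : Polynomial R, Polynomial.aeval ξ f = a := by
    rw [← AlgHom.mem_range, ← Algebra.adjoin_singleton_eq_range_aeval, hgen]
    exact Algebra.mem_top
  refine ⟨f.coeff 0, Polynomial.aeval ξ f.divX, ?_⟩
  conv_lhs => rw [← Polynomial.X_mul_divX_add f]
  simp only [map_add, map_mul, Polynomial.aeval_X, Polynomial.aeval_C, add_comm]

theorem exists_pow_eq_add_pow_add_mul_pow_succ {u : A} (hu : u ∈ Ideal.span {ξ ^ 2}) (m : ℕ) :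
    ∃ s, ξ ^ m = (ξ + u) ^ m + ξ ^ (m + 1) * s := by
  obtain ⟨w, rfl⟩ := Ideal.mem_span_singleton'.mp hu
  obtain ⟨q, hq⟩ : w * ξ ∣ (1 + w * ξ) ^ m - 1 ^ m := by
    simpa using sub_dvd_pow_sub_pow (1 + w * ξ) 1 m
  refine ⟨-(w * q), ?_⟩
  have : (ξ + w * ξ ^ 2) ^ m = ξ ^ m * (1 + w * ξ) ^ m := by rw [← mul_pow]; ring
  rw [one_pow] at hq
  rw [this, eq_add_of_sub_eq hq]
  ring

theorem adjoin_add_eq_top_of_mem_span_sq (hgen : Algebra.adjoin R {ξ} = ⊤)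
    (hnil : IsNilpotent ξ) {u : A} (hu : u ∈ Ideal.span {ξ ^ 2}) :
    Algebra.adjoin R {ξ + u} = ⊤ := by
  set S := Algebra.adjoin R {ξ + u}
  have happrox : ∀ (m : ℕ) (a : A), ∃ s ∈ S, ∃ b, a = s + ξ ^ m * b := by
    intro m
    induction m with
    | zero => exact fun a => ⟨0, S.zero_mem, a, by simp⟩
    | succ m ih =>
      intro a
      obtain ⟨s, hs, b, rfl⟩ := ih a
      obtain ⟨c, b', rfl⟩ := exists_eq_algebraMap_add_mul_of_adjoin_eq_top hgen b
      obtain ⟨q, hq⟩ := exists_pow_eq_add_pow_add_mul_pow_succ hu m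
      refine ⟨s + algebraMap R A c * (ξ + u) ^ m, ?_, algebraMap R A c * q + b', ?_⟩
      · exact S.add_mem hs <| S.mul_mem (S.algebraMap_mem c) <|
          S.pow_mem (Algebra.self_mem_adjoin_singleton R _) m
      · linear_combination algebraMap R A c * hq
  obtain ⟨n, hn⟩ := hnil
  refine eq_top_iff.mpr fun a _ => ?_
  obtain ⟨s, hs, b, rfl⟩ := happrox n a
  rwa [hn, zero_mul, add_zero]

end NilpotentGenerator

theorem Ideal.Quotient.adjoin_mk_X_eq_top {k : Type*} [CommRing k] (I : Ideal (Polynomial k)) :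
    Algebra.adjoin k {Ideal.Quotient.mk I Polynomial.X} = ⊤ := by
  rw [← Ideal.Quotient.mkₐ_eq_mk k, ← Set.image_singleton, ← AlgHom.map_adjoin,
    Polynomial.adjoin_X, Algebra.map_top, AlgHom.range_eq_top]
  exact Ideal.Quotient.mkₐ_surjective k I

theorem stmt8_general (p : ℕ) (k : Type*) [Field k]
    (G : Type*) [Group G]
    (X : G → Submodule k (Polynomial k ⧸ (Ideal.span {Polynomial.X ^ p} : Ideal (Polynomial k))))
    (hind : iSupIndep X) (hsup : (⨆ g, X g) = ⊤)
    (hmul : ∀ g h, X g * X h ≤ X (g * h))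
    (u : Polynomial k ⧸ (Ideal.span {Polynomial.X ^ p} : Ideal (Polynomial k)))
    (hu : u ∈ Ideal.span
      {(Ideal.Quotient.mk (Ideal.span {Polynomial.X ^ p}) Polynomial.X) ^ 2})
    (hxu : Ideal.Quotient.mk (Ideal.span {Polynomial.X ^ p}) Polynomial.X + u ∈ X 1) :
    Ideal.Quotient.mk (Ideal.span {Polynomial.X ^ p}) Polynomial.X ∈ X 1 ∧
    X 1 = ⊤ ∧
    (∀ g : G, g ≠ 1 → X g = ⊥) := by
  have hnil : IsNilpotent
      (Ideal.Quotient.mk (Ideal.span {Polynomial.X ^ p}) (Polynomial.X : Polynomial k)) := by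
    refine ⟨p, ?_⟩
    rw [← map_pow, Ideal.Quotient.eq_zero_iff_mem]
    exact Ideal.mem_span_singleton_self _
  have hX1 : X 1 = ⊤ := grading_one_eq_top_of_adjoin_eq_top hind hsup hmul
    (adjoin_add_eq_top_of_mem_span_sq (Ideal.Quotient.adjoin_mk_X_eq_top _) hnil hu)
    (Set.singleton_subset_iff.mpr hxu)
  refine ⟨hX1 ▸ Submodule.mem_top, hX1, fun g hg => ?_⟩
  exact disjoint_top.mp (hX1 ▸ hind.pairwiseDisjoint hg)

/-- Let `p` be a prime, `k` a field of characteristic `p`, `A = k[x]/(x^p)` and `x̄` the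
class of `x`.  If a grading `(X^g)_{g∈G}` of `A` is such that the trivial component `X^1`
contains an element `x̄ + u` with `u` in the ideal generated by `x̄²`, then `x̄ ∈ X^1`; in
fact `X^1 = A` and `X^g = 0` for all `g ≠ 1`. -/
theorem stmt8 (p : ℕ) (hp : p.Prime) (k : Type*) [Field k] (hchar : CharP k p)
    (G : Type*) [Group G]
    (X : G → Submodule k (Polynomial k ⧸ (Ideal.span {Polynomial.X ^ p} : Ideal (Polynomial k))))
    (hind : iSupIndep X) (hsup : (⨆ g, X g) = ⊤)
    (hmul : ∀ g h, X g * X h ≤ X (g * h))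
    (u : Polynomial k ⧸ (Ideal.span {Polynomial.X ^ p} : Ideal (Polynomial k)))
    (hu : u ∈ Ideal.span
      {(Ideal.Quotient.mk (Ideal.span {Polynomial.X ^ p}) Polynomial.X) ^ 2})
    (hxu : Ideal.Quotient.mk (Ideal.span {Polynomial.X ^ p}) Polynomial.X + u ∈ X 1) :
    Ideal.Quotient.mk (Ideal.span {Polynomial.X ^ p}) Polynomial.X ∈ X 1 ∧
    X 1 = ⊤ ∧
    (∀ g : G, g ≠ 1 → X g = ⊥) :=
  stmt8_general p k G X hind hsup hmul u hu hxu
end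

section
/- Let G be a finite abelian group of order n and let k be a field containing a primitive n-th root of unity. Then the diagonal algebra k^n (functions from an n-element set to k with pointwise operations) admits a connected grading by G in which every homogeneous component is one-dimensional; in particular the support of this grading is all of G. -/
/-!
Since `k` has enough roots of unity, the character group `G →* kˣ` is isomorphic to `G`.
Transported to `Fin n` along a bijection with `G`, the characters `v g` multiply pointwise,
`v g * v h = v (g * h)`, and are linearly independent by Dedekind's lemma, so these `n`
functions form a basis of `k^n`. The lines `k ∙ v g` are then a grading with one-dimensional
components and full support.
-/

theorem IsPrimitiveRoot.hasEnoughRootsOfUnity {R : Type*} [CommRing R] [IsDomain R] {ζ : R}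
    {n : ℕ} [NeZero n] (h : IsPrimitiveRoot ζ n) : HasEnoughRootsOfUnity R n :=
  { prim := ⟨ζ, h⟩, cyc := rootsOfUnity.isCyclic R n }

theorem Submodule.span_singleton_mul_span_singleton {R A : Type*} [CommSemiring R] [Semiring A]
    [Algebra R A] (a b : A) : (R ∙ a) * (R ∙ b) = R ∙ (a * b) := by
  rw [span_mul_span, Set.singleton_mul_singleton]

theorem LinearIndependent.iSup_span_singleton_eq_top {K V ι : Type*} [DivisionRing K]
    [AddCommGroup V] [Module K V] [FiniteDimensional K V] [Fintype ι] {v : ι → V}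
    (hv : LinearIndependent K v) (hcard : Fintype.card ι = Module.finrank K V) :
    ⨆ i, K ∙ v i = ⊤ := by
  rw [← Submodule.span_range_eq_iSup, hv.span_eq_top_of_card_eq_finrank' hcard]

theorem exists_linearIndependent_multiplicative_family (G : Type*) [CommGroup G] [Finite G]
    (k : Type*) [CommRing k] [IsDomain k] [HasEnoughRootsOfUnity k (Monoid.exponent G)]
    {ι : Type*} (e : ι ≃ G) :
    ∃ v : G → ι → k, LinearIndependent k v ∧ ∀ g h, v g * v h = v (g * h) := by
  obtain ⟨χ⟩ := CommGroup.monoidHom_mulEquiv_of_hasEnoughRootsOfUnity G k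
  let character : G → G →* k := fun g => (Units.coeHom k).comp (χ.symm g)
  have character_injective : Function.Injective character := fun a b hab =>
    χ.symm.injective <| MonoidHom.ext fun x => Units.ext (DFunLike.congr_fun hab x)
  let E : (G → k) ≃ₗ[k] (ι → k) := LinearEquiv.funCongrLeft k k e
  refine ⟨fun g => E (character g), ?_, fun g h => ?_⟩
  · exact ((linearIndependent_monoidHom G k).comp _ character_injective).map' E.toLinearMap E.ker
  · ext i
    simp [character, E]

/-- Let `G` be a finite abelian group of order `n` and `k` a field containing a primitive
`n`-th root of unity.  Then the diagonal algebra `k^n` admits a connected grading by `G`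
in which every homogeneous component is one-dimensional; in particular the support is all
of `G`. -/
theorem stmt10 (G : Type*) [CommGroup G] [Fintype G] (n : ℕ) (hn : Fintype.card G = n)
    (k : Type*) [Field k] (q : k) (hq : IsPrimitiveRoot q n) :
    ∃ X : G → Submodule k (Fin n → k),
      iSupIndep X ∧ (⨆ g, X g) = ⊤ ∧
      (∀ g h, X g * X h ≤ X (g * h)) ∧
      (∀ g, Module.finrank k (X g) = 1) ∧
      {g | X g ≠ ⊥} = Set.univ ∧
      Subgroup.closure {g | X g ≠ ⊥} = ⊤ := by
  subst hn
  have := hq.hasEnoughRootsOfUnity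
  have := HasEnoughRootsOfUnity.of_dvd k (Group.exponent_dvd_card (G := G))
  obtain ⟨v, hli, hmul⟩ :=
    exists_linearIndependent_multiplicative_family G k (Fintype.equivFin G).symm
  have hsupport : {g | k ∙ v g ≠ ⊥} = Set.univ := by
    ext g
    simp [hli.ne_zero g]
  refine ⟨fun g => k ∙ v g, hli.iSupIndep_span_singleton,
    hli.iSup_span_singleton_eq_top (by simp), fun g h => ?_,
    fun g => finrank_span_singleton (hli.ne_zero g), hsupport, ?_⟩
  · rw [Submodule.span_singleton_mul_span_singleton, hmul]
  · rw [hsupport, Subgroup.closure_univ]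
end

section
/- Let k be a field of characteristic different from 2. If a group G admits a connected grading of the diagonal algebra k × k (with componentwise operations), then either G is trivial or G is cyclic of order 2. In particular, the support of any grading of k × k has at most two elements, and any nontrivial degree s in the support satisfies s² = 1. -/
/-!
The unit of a group-graded algebra is homogeneous of degree `1`: write `1 = e + u` with `e` of
degree `1` and `u` in the other degrees; for `x` of degree `h`, `x * u = x - x * e` lies both in
degree `h` and in the degrees `≠ h`, so it vanishes, hence `u = 1 * u = 0`. Thus `1` is in the
support. The support of a grading of `k × k` has at most `dim (k × k) = 2` elements, and it is
closed under squaring because `k × k` is reduced. So a nontrivial degree `s` of the support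
gives support `{1, s}` with `s ^ 2 = 1`, and `G`, being generated by the support, is `⟨s⟩ ≅ C₂`.
-/

theorem Set.eq_pair_of_ncard_le_two {α : Type*} {S : Set α} {a b : α} (hS : S.Finite)
    (hcard : S.ncard ≤ 2) (ha : a ∈ S) (hb : b ∈ S) (hab : a ≠ b) : S = {a, b} :=
  (Set.eq_of_subset_of_ncard_le (Set.pair_subset ha hb) (by rwa [Set.ncard_pair hab]) hS).symm

section SmallGeneratingSet

variable {G : Type*} {S : Set G}

theorem sq_eq_one_of_mul_self_mem_of_ncard_le_two [LeftCancelMonoid G] (hS : S.Finite)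
    (hcard : S.ncard ≤ 2) (h1 : 1 ∈ S) {s : G} (hs : s ∈ S) (hs1 : s ≠ 1) (hss : s * s ∈ S) :
    s ^ 2 = 1 := by
  rw [Set.eq_pair_of_ncard_le_two hS hcard h1 hs hs1.symm] at hss
  rcases hss with hss | hss
  · rwa [sq]
  · exact absurd (mul_eq_left.1 hss) hs1

theorem eq_one_or_isCyclic_and_card_eq_two_of_closure_eq_top [Group G] (hS : S.Finite)
    (hcard : S.ncard ≤ 2) (h1 : 1 ∈ S) (hmul_self : ∀ s ∈ S, s * s ∈ S)
    (hgen : Subgroup.closure S = ⊤) : (∀ g : G, g = 1) ∨ (IsCyclic G ∧ Nat.card G = 2) := by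
  by_cases hS1 : S ⊆ {1}
  · have htop : (⊤ : Subgroup G) = ⊥ := hgen ▸ Subgroup.closure_eq_bot_iff.2 hS1
    exact Or.inl fun g => Subgroup.mem_bot.1 (htop ▸ Subgroup.mem_top g)
  obtain ⟨s, hs, hs1⟩ := Set.not_subset.1 hS1
  have hzpowers : Subgroup.zpowers s = ⊤ := by
    rw [← hgen, Set.eq_pair_of_ncard_le_two hS hcard h1 hs (Ne.symm hs1),
      Subgroup.closure_insert_one, Subgroup.zpowers_eq_closure]
  have hsq : s ^ 2 = 1 :=
    sq_eq_one_of_mul_self_mem_of_ncard_le_two hS hcard h1 hs hs1 (hmul_self s hs)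
  refine Or.inr ⟨isCyclic_iff_exists_zpowers_eq_top.2 ⟨s, hzpowers⟩, ?_⟩
  rw [← Subgroup.card_top, ← hzpowers, Nat.card_zpowers, orderOf_eq_prime hsq hs1]

end SmallGeneratingSet

theorem iSupIndep.finite_ne_bot {K V ι : Type*} [DivisionRing K] [AddCommGroup V] [Module K V]
    [FiniteDimensional K V] {p : ι → Submodule K V} (hp : iSupIndep p) :
    {i | p i ≠ ⊥}.Finite :=
  Set.finite_coe_iff.mp (@Finite.of_fintype _ hp.fintypeNeBotOfFiniteDimensional)

theorem iSupIndep.ncard_ne_bot_le_finrank {K V ι : Type*} [DivisionRing K] [AddCommGroup V]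
    [Module K V] [FiniteDimensional K V] {p : ι → Submodule K V} (hp : iSupIndep p) :
    {i | p i ≠ ⊥}.ncard ≤ Module.finrank K V := by
  have := hp.fintypeNeBotOfFiniteDimensional
  rw [← Nat.card_coe_set_eq, Set.coe_ofPred, Nat.card_eq_fintype_card]
  exact hp.subtype_ne_bot_le_finrank

namespace Submodule

variable {R A G : Type*} [CommRing R] [Ring A] [Algebra R A] {X : G → Submodule R A}

theorem mul_iSup_ne_one_le [LeftCancelMonoid G] (hmul : ∀ g h, X g * X h ≤ X (g * h)) (h : G) :
    X h * (⨆ (g) (_ : g ≠ 1), X g) ≤ ⨆ (g) (_ : g ≠ h), X g := by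
  simp only [mul_iSup]
  exact iSup₂_le fun g hg => (hmul h g).trans (le_iSup₂_of_le (h * g) (mul_ne_left.2 hg) le_rfl)

theorem one_mem_of_grading [LeftCancelMonoid G] (hind : iSupIndep X) (hsup : ⨆ g, X g = ⊤)
    (hmul : ∀ g h, X g * X h ≤ X (g * h)) : (1 : A) ∈ X 1 := by
  have hone : (1 : A) ∈ X 1 ⊔ ⨆ (g) (_ : g ≠ 1), X g := by
    rw [← iSup_split_single, hsup]; exact mem_top
  obtain ⟨e, he, u, hu, heu⟩ := mem_sup.1 hone
  have hom_mul_u : ∀ h, ∀ x ∈ X h, x * u = 0 := by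
    intro h x hx
    have hxu : x * u = x - x * e := by
      rw [eq_sub_iff_add_eq, ← mul_add, add_comm, heu, mul_one]
    have hxe : x * e ∈ X h := by simpa using hmul h 1 (mul_mem_mul hx he)
    refine disjoint_def.1 (hind h) _ ?_ (mul_iSup_ne_one_le hmul h (mul_mem_mul hx hu))
    rw [hxu]
    exact sub_mem hx hxe
  have hmul_u : ∀ x : A, x * u = 0 := fun x =>
    iSup_induction X (motive := fun x => x * u = 0) (hsup ▸ mem_top) hom_mul_u (zero_mul u)
      fun a b ha hb => by rw [add_mul, ha, hb, add_zero]
  have hu0 : u = 0 := by simpa using hmul_u 1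
  rwa [← heu, hu0, add_zero]

theorem ne_bot_mul_self [Mul G] [IsReduced A] (hmul : ∀ g h, X g * X h ≤ X (g * h)) {s : G}
    (hs : X s ≠ ⊥) : X (s * s) ≠ ⊥ := by
  obtain ⟨v, hv, hv0⟩ := (X s).ne_bot_iff.1 hs
  refine (X (s * s)).ne_bot_iff.2 ⟨v * v, hmul s s (mul_mem_mul hv hv), fun hvv => hv0 ?_⟩
  exact IsReduced.eq_zero v ⟨2, by rwa [sq]⟩

end Submodule

theorem stmt11_general (k : Type*) [Field k]
    (G : Type*) [Group G] (X : G → Submodule k (k × k))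
    (hind : iSupIndep X) (hsup : (⨆ g, X g) = ⊤)
    (hmul : ∀ g h, X g * X h ≤ X (g * h))
    (hconn : Subgroup.closure {g | X g ≠ ⊥} = ⊤) :
    ((∀ g : G, g = 1) ∨ (IsCyclic G ∧ Nat.card G = 2)) ∧
    {g | X g ≠ ⊥}.Finite ∧ {g | X g ≠ ⊥}.ncard ≤ 2 ∧
    (∀ s ∈ {g | X g ≠ ⊥}, s ≠ 1 → s ^ 2 = 1) := by
  have h1 : X 1 ≠ ⊥ :=
    (X 1).ne_bot_iff.2 ⟨1, Submodule.one_mem_of_grading hind hsup hmul, one_ne_zero⟩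
  have hfin : {g | X g ≠ ⊥}.Finite := hind.finite_ne_bot
  have hcard : {g | X g ≠ ⊥}.ncard ≤ 2 := by
    simpa [Module.finrank_prod] using hind.ncard_ne_bot_le_finrank
  have hmul_self : ∀ s ∈ {g | X g ≠ ⊥}, s * s ∈ {g | X g ≠ ⊥} :=
    fun _ => Submodule.ne_bot_mul_self hmul
  exact ⟨eq_one_or_isCyclic_and_card_eq_two_of_closure_eq_top hfin hcard h1 hmul_self hconn,
    hfin, hcard, fun s hs hs1 =>
      sq_eq_one_of_mul_self_mem_of_ncard_le_two hfin hcard h1 hs hs1 (hmul_self s hs)⟩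

/-- Let `k` be a field of characteristic different from 2.  If a group `G` admits a
connected grading of the diagonal algebra `k × k`, then `G` is trivial or cyclic of order
2; in particular the support of the grading has at most two elements and every nontrivial
degree `s` in the support satisfies `s² = 1`. -/
theorem stmt11 (k : Type*) [Field k] (hchar : ringChar k ≠ 2)
    (G : Type*) [Group G] (X : G → Submodule k (k × k))
    (hind : iSupIndep X) (hsup : (⨆ g, X g) = ⊤)
    (hmul : ∀ g h, X g * X h ≤ X (g * h))
    (hconn : Subgroup.closure {g | X g ≠ ⊥} = ⊤) :
    ((∀ g : G, g = 1) ∨ (IsCyclic G ∧ Nat.card G = 2)) ∧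
    {g | X g ≠ ⊥}.Finite ∧ {g | X g ≠ ⊥}.ncard ≤ 2 ∧
    (∀ s ∈ {g | X g ≠ ⊥}, s ≠ 1 → s ^ 2 = 1) :=
  stmt11_general k G X hind hsup hmul hconn
end

section
/- Let A and B be k-algebras equipped with connected gradings (X^s)_{s∈G} by a group G and (Y^t)_{t∈H} by a group H, respectively. Then the product algebra A × B admits a connected grading (Z^w)_{w∈G∗H} by the free product G ∗ H, defined by Z^1 = X^1 × Y^1, Z^{inl(s)} = X^s × 0 for s ∈ G with s ≠ 1, Z^{inr(t)} = 0 × Y^t for t ∈ H with t ≠ 1, and Z^w = 0 for all other w ∈ G ∗ H; its support is the union of the images of the supports of X and Y under the canonical inclusions, and it generates G ∗ H. -/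
/-! Extend `X` and `Y` by `⊥` along `inl` and `inr`, and take the componentwise product of the
two resulting `G ∗ H`-gradings. Independence, exhaustiveness and multiplicativity survive both
operations, and the support becomes `inl '' supp X ∪ inr '' supp Y`, which generates `G ∗ H`
because the images of `inl` and `inr` do. -/

open Function

section ExtendBot

variable {ι β α : Type*} [CompleteLattice α] {e : ι → β}

theorem iSupIndep.extend_bot {t : ι → α} (ht : iSupIndep t) (he : Injective e) :
    iSupIndep (extend e t ⊥) := by
  intro j
  by_cases hj : ∃ i, e i = j
  · obtain ⟨i, rfl⟩ := hj
    rw [he.extend_apply]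
    refine (ht i).mono_right (iSup₂_le fun j' hj' => ?_)
    by_cases hj'' : ∃ i', e i' = j'
    · obtain ⟨i', rfl⟩ := hj''
      rw [he.extend_apply]
      exact le_iSup₂_of_le i' (fun h => hj' (congrArg e h)) le_rfl
    · simp [extend_apply' _ _ _ hj'']
  · simp [extend_apply' _ _ _ hj]

theorem setOf_extend_bot_ne_bot (he : Injective e) (t : ι → α) :
    {j | extend e t ⊥ j ≠ ⊥} = e '' {i | t i ≠ ⊥} := by
  ext j
  by_cases hj : ∃ i, e i = j
  · obtain ⟨i, rfl⟩ := hj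
    simp [he.extend_apply, he.eq_iff]
  · simp only [Set.mem_ofPred_eq, extend_apply' _ _ _ hj, Pi.bot_apply, ne_eq, not_true_eq_false,
      false_iff]
    exact fun ⟨i, _, hi⟩ => hj ⟨i, hi⟩

end ExtendBot

namespace Submodule

variable {R : Type*} [CommSemiring R]

section Prod

variable {ι : Sort*} {M M' : Type*} [AddCommMonoid M] [Module R M] [AddCommMonoid M'] [Module R M']

theorem iSup_prod_eq_prod_iSup (p : ι → Submodule R M) (q : ι → Submodule R M') :
    ⨆ i, (p i).prod (q i) = (⨆ i, p i).prod (⨆ i, q i) := by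
  simp only [LinearMap.prod_eq_sup_map, iSup_sup_eq, map_iSup]

theorem iSupIndep_prod {p : ι → Submodule R M} {q : ι → Submodule R M'}
    (hp : iSupIndep p) (hq : iSupIndep q) : iSupIndep fun i => (p i).prod (q i) := by
  intro i
  simp only [disjoint_iff, iSup_prod_eq_prod_iSup, prod_inf_prod, prod_eq_bot_iff]
  exact ⟨(hp i).eq_bot, (hq i).eq_bot⟩

end Prod

variable {A B : Type*} [Semiring A] [Algebra R A] [Semiring B] [Algebra R B]

theorem prod_mul_prod_le (p p' : Submodule R A) (q q' : Submodule R B) :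
    p.prod q * p'.prod q' ≤ (p * p').prod (q * q') :=
  mul_le.2 fun _ hx _ hy => ⟨mul_mem_mul hx.1 hy.1, mul_mem_mul hx.2 hy.2⟩

theorem extend_bot_mul_le {G W F : Type*} [Mul G] [Mul W] [FunLike F G W] [MulHomClass F G W]
    {f : F} (hf : Injective f) {X : G → Submodule R A} (hX : ∀ g g', X g * X g' ≤ X (g * g'))
    (w w' : W) : extend f X ⊥ w * extend f X ⊥ w' ≤ extend f X ⊥ (w * w') := by
  by_cases hw : ∃ g, f g = w
  · by_cases hw' : ∃ g', f g' = w'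
    · obtain ⟨g, rfl⟩ := hw
      obtain ⟨g', rfl⟩ := hw'
      rw [← map_mul, hf.extend_apply, hf.extend_apply, hf.extend_apply]
      exact hX g g'
    · simp [extend_apply' _ _ _ hw']
  · simp [extend_apply' _ _ _ hw]

end Submodule

section Grading

variable {R A B ι κ : Type*} [CommSemiring R] [Semiring A] [Algebra R A] [Semiring B]
  [Algebra R B] [Mul ι] [Mul κ]

structure IsGrading_s12 (X : ι → Submodule R A) : Prop where
  iSupIndep : iSupIndep X
  iSup_eq_top : ⨆ i, X i = ⊤
  mul_le : ∀ i j, X i * X j ≤ X (i * j)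

theorem IsGrading_s12.extend_bot {F : Type*} [FunLike F ι κ] [MulHomClass F ι κ] {f : F}
    (hf : Injective f) {X : ι → Submodule R A} (hX : IsGrading_s12 X) :
    IsGrading_s12 (extend f X ⊥) where
  iSupIndep := hX.iSupIndep.extend_bot hf
  iSup_eq_top := (iSup_extend_bot hf X).trans hX.iSup_eq_top
  mul_le := Submodule.extend_bot_mul_le hf hX.mul_le

theorem IsGrading_s12.prod {P : ι → Submodule R A} {Q : ι → Submodule R B} (hP : IsGrading_s12 P)
    (hQ : IsGrading_s12 Q) : IsGrading_s12 fun i => (P i).prod (Q i) where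
  iSupIndep := Submodule.iSupIndep_prod hP.iSupIndep hQ.iSupIndep
  iSup_eq_top := by
    rw [Submodule.iSup_prod_eq_prod_iSup, hP.iSup_eq_top, hQ.iSup_eq_top, Submodule.prod_top]
  mul_le i j := (Submodule.prod_mul_prod_le _ _ _ _).trans
    (Submodule.prod_mono (hP.mul_le i j) (hQ.mul_le i j))

end Grading

namespace Monoid.Coprod

variable {M N : Type*} [Monoid M] [Monoid N]

theorem inl_ne_inr {m : M} (hm : m ≠ 1) (n : N) : (inl m : M ∗ N) ≠ inr n :=
  fun h => hm (by simpa using congrArg fst h)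

theorem inr_ne_inl {n : N} (hn : n ≠ 1) (m : M) : (inr n : M ∗ N) ≠ inl m :=
  fun h => hn (by simpa using congrArg snd h)

theorem closure_image_inl_union_image_inr {G H : Type*} [Group G] [Group H] {S : Set G}
    {T : Set H} (hS : Subgroup.closure S = ⊤) (hT : Subgroup.closure T = ⊤) :
    Subgroup.closure ((inl : G →* G ∗ H) '' S ∪ inr '' T) = ⊤ := by
  rw [Subgroup.closure_union, ← MonoidHom.map_closure, ← MonoidHom.map_closure, hS, hT,
    ← MonoidHom.range_eq_map, ← MonoidHom.range_eq_map, range_inl_sup_range_inr]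

end Monoid.Coprod

open Monoid

/-- Let `A` and `B` be `k`-algebras with connected gradings `X` (by `G`) and `Y` (by `H`).
Then `A × B` admits a connected grading `Z` by the free product `G ∗ H`, with
`Z^1 = X^1 × Y^1`, `Z^{inl s} = X^s × 0` for `s ≠ 1`, `Z^{inr t} = 0 × Y^t` for `t ≠ 1`
and `Z^w = 0` otherwise; its support is the union of the images of the supports of `X`
and `Y` under the canonical inclusions, and it generates `G ∗ H`. -/
theorem stmt12 (k : Type*) [Field k]
    (A : Type*) [Ring A] [Algebra k A] (B : Type*) [Ring B] [Algebra k B]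
    (G : Type*) [Group G] (H : Type*) [Group H]
    (X : G → Submodule k A) (Y : H → Submodule k B)
    (hXind : iSupIndep X) (hXsup : (⨆ g, X g) = ⊤)
    (hXmul : ∀ g g', X g * X g' ≤ X (g * g'))
    (hXconn : Subgroup.closure {g | X g ≠ ⊥} = ⊤)
    (hYind : iSupIndep Y) (hYsup : (⨆ t, Y t) = ⊤)
    (hYmul : ∀ t t', Y t * Y t' ≤ Y (t * t'))
    (hYconn : Subgroup.closure {t | Y t ≠ ⊥} = ⊤) :
    ∃ Z : Coprod G H → Submodule k (A × B),
      iSupIndep Z ∧ (⨆ w, Z w) = ⊤ ∧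
      (∀ w w', Z w * Z w' ≤ Z (w * w')) ∧
      Z 1 = (X 1).prod (Y 1) ∧
      (∀ s : G, s ≠ 1 → Z (Coprod.inl s) = (X s).prod (⊥ : Submodule k B)) ∧
      (∀ t : H, t ≠ 1 → Z (Coprod.inr t) = (⊥ : Submodule k A).prod (Y t)) ∧
      (∀ w : Coprod G H, (∀ s : G, w ≠ Coprod.inl s) → (∀ t : H, w ≠ Coprod.inr t) →
        Z w = ⊥) ∧
      {w | Z w ≠ ⊥} =
        (Coprod.inl '' {s : G | X s ≠ ⊥}) ∪ (Coprod.inr '' {t : H | Y t ≠ ⊥}) ∧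
      Subgroup.closure {w | Z w ≠ ⊥} = ⊤ := by
  set P : Coprod G H → Submodule k A := extend Coprod.inl X ⊥
  set Q : Coprod G H → Submodule k B := extend Coprod.inr Y ⊥
  have hP (s : G) : P (Coprod.inl s) = X s := Coprod.inl_injective.extend_apply X ⊥ s
  have hQ (t : H) : Q (Coprod.inr t) = Y t := Coprod.inr_injective.extend_apply Y ⊥ t
  have hP_of_ne (w : Coprod G H) (hw : ∀ s, w ≠ Coprod.inl s) : P w = ⊥ :=
    extend_apply' X ⊥ w fun ⟨s, hs⟩ => hw s hs.symm
  have hQ_of_ne (w : Coprod G H) (hw : ∀ t, w ≠ Coprod.inr t) : Q w = ⊥ :=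
    extend_apply' Y ⊥ w fun ⟨t, ht⟩ => hw t ht.symm
  have hZ : IsGrading_s12 fun w => (P w).prod (Q w) :=
    (IsGrading_s12.mk hXind hXsup hXmul |>.extend_bot Coprod.inl_injective).prod
      (IsGrading_s12.mk hYind hYsup hYmul |>.extend_bot Coprod.inr_injective)
  have hsupp : {w | (P w).prod (Q w) ≠ ⊥} =
      Coprod.inl '' {s | X s ≠ ⊥} ∪ Coprod.inr '' {t | Y t ≠ ⊥} := by
    rw [← setOf_extend_bot_ne_bot Coprod.inl_injective,
      ← setOf_extend_bot_ne_bot Coprod.inr_injective, ← Set.ofPred_or]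
    simp only [ne_eq, Submodule.prod_eq_bot_iff, not_and_or, P, Q]
  refine ⟨fun w => (P w).prod (Q w), hZ.iSupIndep, hZ.iSup_eq_top, hZ.mul_le, ?_, ?_, ?_, ?_,
    hsupp, hsupp ▸ Coprod.closure_image_inl_union_image_inr hXconn hYconn⟩
  · show (P 1).prod (Q 1) = _
    rw [← map_one Coprod.inl, hP, map_one, ← map_one Coprod.inr, hQ]
  · intro s hs
    show (P _).prod (Q _) = _
    rw [hP, hQ_of_ne _ (Coprod.inl_ne_inr hs)]
  · intro t ht
    show (P _).prod (Q _) = _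
    rw [hQ, hP_of_ne _ (Coprod.inr_ne_inl ht)]
  · intro w hinl hinr
    show (P w).prod (Q w) = ⊥
    rw [hP_of_ne w hinl, hQ_of_ne w hinr, Submodule.prod_bot]
end

section
/- Let k be a field containing a primitive 6-th root of unity. Then the diagonal algebra k^5 (functions from a 5-element set to k with pointwise operations) admits a connected grading by the cyclic group C_6 = ZMod 6, i.e., a grading whose support generates ZMod 6. -/
/-!
An algebra automorphism `T` of `k^5` with `T^6 = 1` grades `k^5` by `ZMod 6`: put the eigenspace
of `q^a` in degree `a`. These eigenspaces are independent, they span because `X^6 - 1` splits into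
distinct linear factors over `k`, and they multiply according to the degrees because `T` is
multiplicative. Take for `T` the automorphism induced by the permutation `(0 1)(2 3 4)` of the five
points: its eigenvalues include `-1 = q^3` and `q^2`, and `2, 3` generate `ZMod 6`.
-/

open Polynomial

namespace Module.End

variable {K M : Type*} [Field K] [AddCommGroup M] [Module K M]

theorem ker_aeval_prod_X_sub_C (f : End K M) (s : Finset K) :
    LinearMap.ker (aeval f (∏ μ ∈ s, (X - C μ))) = ⨆ μ ∈ s, f.eigenspace μ := by
  classical
  induction s using Finset.induction_on with
  | empty => simp [one_eq_id]
  | insert a s ha ih =>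
    have hcop : IsCoprime (X - C a) (∏ μ ∈ s, (X - C μ)) :=
      IsCoprime.prod_right fun μ hμ => isCoprime_X_sub_C_of_isUnit_sub
        (sub_ne_zero_of_ne (ne_of_mem_of_not_mem hμ ha).symm).isUnit
    rw [Finset.prod_insert ha, ← sup_ker_aeval_eq_ker_aeval_mul_of_coprime f hcop, ih,
      Finset.iSup_insert, eigenspace_def]
    simp [Algebra.algebraMap_eq_smul_one]

end Module.End

section EigenGrading

variable {k A : Type*} [Field k] [Ring A] [Algebra k A] {n : ℕ}

def eigenGrading (f : Module.End k A) (q : k) (a : ZMod n) : Submodule k A :=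
  f.eigenspace (q ^ a.val)

theorem eigenGrading_mul_le [NeZero n] {f : Module.End k A}
    (hf : ∀ x y, f (x * y) = f x * f y) {q : k} (hq : q ^ n = 1) (a b : ZMod n) :
    eigenGrading f q a * eigenGrading f q b ≤ eigenGrading f q (a + b) := by
  refine Submodule.mul_le.2 fun x hx y hy => ?_
  rw [eigenGrading, Module.End.mem_eigenspace_iff] at *
  have hpow : q ^ (a + b).val = q ^ a.val * q ^ b.val := by
    rw [← pow_add, ZMod.val_add, ← pow_eq_pow_mod _ hq]
  rw [hf, hx, hy, smul_mul_smul_comm, hpow]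

theorem iSupIndep_eigenGrading [NeZero n] (f : Module.End k A) {q : k}
    (hq : IsPrimitiveRoot q n) : iSupIndep (eigenGrading f q : ZMod n → Submodule k A) :=
  f.eigenspaces_iSupIndep.comp fun a b hab =>
    ZMod.val_injective n (hq.pow_inj (ZMod.val_lt a) (ZMod.val_lt b) hab)

theorem iSup_eigenGrading [NeZero n] {f : Module.End k A} (hf : f ^ n = 1) {q : k}
    (hq : IsPrimitiveRoot q n) : ⨆ a : ZMod n, eigenGrading f q a = ⊤ := by
  have hker : LinearMap.ker (aeval f (X ^ n - 1 : k[X])) = ⊤ := by simp [hf]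
  rw [eq_top_iff, ← hker, X_pow_sub_one_eq_prod (NeZero.pos n) hq,
    Module.End.ker_aeval_prod_X_sub_C]
  refine iSup₂_le fun μ hμ => ?_
  obtain ⟨i, hi, rfl⟩ := hq.eq_pow_of_pow_eq_one ((mem_nthRootsFinset (NeZero.pos n) 1).1 hμ)
  refine le_iSup_of_le (i : ZMod n) ?_
  rw [eigenGrading, ZMod.val_natCast, Nat.mod_eq_of_lt hi]

theorem eigenGrading_ne_bot {f : Module.End k A} {q : k} {a : ZMod n} {x : A} (hx : x ≠ 0)
    (hfx : f x = q ^ a.val • x) : eigenGrading f q a ≠ ⊥ :=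
  (Submodule.ne_bot_iff _).2 ⟨x, Module.End.mem_eigenspace_iff.2 hfx, hx⟩

end EigenGrading

theorem LinearMap.funLeft_pow (R M : Type*) [Semiring R] [AddCommMonoid M] [Module R M]
    {m : Type*} (σ : m → m) (n : ℕ) : funLeft R M σ ^ n = funLeft R M σ^[n] := by
  induction n with
  | zero => rfl
  | succ n ih => rw [pow_succ', ih, Function.iterate_succ]; rfl

theorem ZMod.addSubgroup_eq_top_of_one_mem {n : ℕ} {S : AddSubgroup (ZMod n)} (h : 1 ∈ S) :
    S = ⊤ :=
  eq_top_iff.2 fun x _ => by simpa using S.zsmul_mem h x.cast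

section TwoThreeCycle

def twoThreeCycle : Fin 5 → Fin 5 := ![1, 0, 3, 4, 2]

theorem twoThreeCycle_iterate_six : twoThreeCycle^[6] = id := by decide

variable {k : Type*} [Field k] {q : k}

theorem funLeft_twoThreeCycle_of_pow_three (hq : q ^ 3 = -1) :
    LinearMap.funLeft k k twoThreeCycle ![1, -1, 0, 0, 0] = q ^ 3 • ![1, -1, 0, 0, 0] := by
  ext x; fin_cases x <;> simp [twoThreeCycle, hq]

theorem funLeft_twoThreeCycle_of_pow_six (hq : q ^ 6 = 1) :
    LinearMap.funLeft k k twoThreeCycle ![0, 0, 1, q ^ 2, q ^ 4] =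
      q ^ 2 • ![0, 0, 1, q ^ 2, q ^ 4] := by
  ext x; fin_cases x <;> simp [twoThreeCycle, ← pow_add, hq]

end TwoThreeCycle

/-- Let `k` be a field containing a primitive 6-th root of unity.  Then the diagonal
algebra `k^5` admits a connected grading by the cyclic group `C_6 = ZMod 6`, i.e. a
grading whose support generates `ZMod 6`. -/
theorem stmt13 (k : Type*) [Field k] (q : k) (hq : IsPrimitiveRoot q 6) :
    ∃ X : ZMod 6 → Submodule k (Fin 5 → k),
      iSupIndep X ∧ (⨆ a, X a) = ⊤ ∧
      (∀ a b, X a * X b ≤ X (a + b)) ∧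
      AddSubgroup.closure {a | X a ≠ ⊥} = ⊤ := by
  set f := LinearMap.funLeft k k twoThreeCycle
  have hf : f ^ 6 = 1 := by rw [LinearMap.funLeft_pow, twoThreeCycle_iterate_six]; rfl
  have hq3 : q ^ 3 = -1 := by
    simpa using (hq.pow_of_dvd (by norm_num) (by norm_num : 3 ∣ 6)).eq_neg_one_of_two_right
  refine ⟨eigenGrading f q, iSupIndep_eigenGrading f hq, iSup_eigenGrading hf hq,
    eigenGrading_mul_le (fun _ _ => rfl) hq.pow_eq_one, ZMod.addSubgroup_eq_top_of_one_mem ?_⟩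
  have h2 : (2 : ZMod 6) ∈ AddSubgroup.closure {a | eigenGrading f q a ≠ ⊥} :=
    AddSubgroup.subset_closure <| eigenGrading_ne_bot (x := ![0, 0, 1, q ^ 2, q ^ 4])
      (by simp) (funLeft_twoThreeCycle_of_pow_six hq.pow_eq_one)
  have h3 : (3 : ZMod 6) ∈ AddSubgroup.closure {a | eigenGrading f q a ≠ ⊥} :=
    AddSubgroup.subset_closure <| eigenGrading_ne_bot (x := ![1, -1, 0, 0, 0])
      (by simp) (funLeft_twoThreeCycle_of_pow_three hq3)
  exact (show (3 - 2 : ZMod 6) = 1 by decide) ▸ AddSubgroup.sub_mem _ h3 h2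
end
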